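/- arXiv:2502.05691 — 2 statements merged into one kernel-verified Lean document; each statement's English description precedes it below -/
import Mathlib

section
/- Let w and w_n (n ∈ ℕ) be graphons with ‖w_n − w‖_□ → 0 as n → ∞. Then for every f ∈ L²[0,1], ‖L_{w_n}^{1/2} f‖² → ‖L_w^{1/2} f‖² as n → ∞; equivalently, ⟨L_{w_n} f, f⟩ → ⟨L_w f, f⟩. -/
open MeasureTheory Filter
open scoped ENNReal InnerProductSpace

noncomputable section

/-- A graphon: a symmetric measurable function `w : [0,1]² → [0,1]` (extended to `ℝ²`). -/
def IsGraphon (w : ℝ → ℝ → ℝ) : Prop :=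
  Measurable (Function.uncurry w) ∧ (∀ x y, w x y = w y x) ∧ ∀ x y, w x y ∈ Set.Icc (0:ℝ) 1

/-- The cut norm of a kernel `u` on `[0,1]²`:
`‖u‖_□ = sup_{S,T ⊆ [0,1] measurable} |∫_{S×T} u(x,y) dx dy|`. -/
def cutNorm (u : ℝ → ℝ → ℝ) : ℝ :=
  ⨆ p : {S : Set ℝ // MeasurableSet S} × {T : Set ℝ // MeasurableSet T},
    |∫ x in p.1.1 ∩ Set.Icc (0:ℝ) 1, ∫ y in p.2.1 ∩ Set.Icc (0:ℝ) 1, u x y|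

section GraphonAuxSec
open Function
namespace GraphonAux

abbrev I01 : Set ℝ := Set.Icc (0:ℝ) 1
abbrev mu : Measure ℝ := volume.restrict I01
instance : IsProbabilityMeasure mu := ⟨by simp [Real.volume_Icc]⟩

lemma integrable_of_bdd {α : Type*} [MeasurableSpace α] {ν : Measure α} [IsFiniteMeasure ν]
    {g : α → ℝ}
    (hg : AEStronglyMeasurable g ν) (C : ℝ) (hC : ∀ x, |g x| ≤ C) : Integrable g ν :=
  (integrable_const C).mono' hg (ae_of_all _ (by simpa [Real.norm_eq_abs] using hC))

lemma integrable_prod_of_bdd {ν₁ ν₂ : Measure ℝ} [SFinite ν₂] [IsFiniteMeasure ν₁]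
    [IsFiniteMeasure ν₂] {F : ℝ → ℝ → ℝ} (hF : Measurable (uncurry F)) (C : ℝ)
    (hC : ∀ x y, |F x y| ≤ C) : Integrable (uncurry F) (ν₁.prod ν₂) :=
  integrable_of_bdd hF.aestronglyMeasurable C (fun z => hC z.1 z.2)

/-- `|∫ m·g| ≤ Mg * (|∫_P m| + |∫_{Pᶜ} m|)` where `P = {0 ≤ m}`. -/
lemma abs_integral_mul_le2 {m g : ℝ → ℝ} (hm : Measurable m) (hmi : Integrable m mu)
    (hg : Measurable g) {Mg : ℝ} (hgb : ∀ x, |g x| ≤ Mg) :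
    |∫ x, m x * g x ∂mu| ≤
      Mg * (|∫ x in {x | 0 ≤ m x}, m x ∂mu| + |∫ x in {x | 0 ≤ m x}ᶜ, m x ∂mu|) := by
  have hMg0 : 0 ≤ Mg := le_trans (abs_nonneg _) (hgb 0)
  have hmg : Integrable (fun x => m x * g x) mu := by
    have := hmi.bdd_mul (c := Mg) hg.aestronglyMeasurable
      (ae_of_all _ (fun x => by simpa [Real.norm_eq_abs] using hgb x))
    simpa [mul_comm] using this
  have hP : MeasurableSet {x : ℝ | 0 ≤ m x} := measurableSet_le measurable_const hm
  have h1 : |∫ x, m x * g x ∂mu| ≤ ∫ x, |m x| * Mg ∂mu := by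
    calc |∫ x, m x * g x ∂mu| ≤ ∫ x, |m x * g x| ∂mu :=
          (Real.norm_eq_abs _ ▸ norm_integral_le_integral_norm (μ := mu)
            (fun x => m x * g x)).trans_eq (by simp [Real.norm_eq_abs, abs_mul])
      _ ≤ ∫ x, |m x| * Mg ∂mu := by
          refine integral_mono hmg.abs (hmi.abs.mul_const Mg) (fun x => ?_)
          rw [abs_mul]
          exact mul_le_mul_of_nonneg_left (hgb x) (abs_nonneg _)
  have h2 : ∫ x, |m x| ∂mu =
      (∫ x in {x | 0 ≤ m x}, m x ∂mu) - ∫ x in {x | 0 ≤ m x}ᶜ, m x ∂mu := by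
    rw [← integral_add_compl hP hmi.abs]
    congr 1
    · exact setIntegral_congr_fun hP (fun x hx => abs_of_nonneg hx)
    · rw [← integral_neg]
      exact setIntegral_congr_fun hP.compl
        (fun x hx => abs_of_neg (lt_of_not_ge hx))
  calc |∫ x, m x * g x ∂mu| ≤ ∫ x, |m x| * Mg ∂mu := h1
    _ = (∫ x, |m x| ∂mu) * Mg := integral_mul_const Mg _
    _ ≤ (|∫ x in {x | 0 ≤ m x}, m x ∂mu| + |∫ x in {x | 0 ≤ m x}ᶜ, m x ∂mu|) * Mg := by
        refine mul_le_mul_of_nonneg_right ?_ hMg0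
        rw [h2]
        have h3 := le_abs_self (∫ x in {x | 0 ≤ m x}, m x ∂mu)
        have h4 := neg_abs_le (∫ x in {x | 0 ≤ m x}ᶜ, m x ∂mu)
        linarith
    _ = Mg * _ := mul_comm _ _


variable {u : ℝ → ℝ → ℝ}

lemma vol_inter_le (S : Set ℝ) : ((volume (S ∩ I01)).toReal : ℝ) ≤ 1 := by
  have h1 : volume (S ∩ I01) ≤ volume I01 := measure_mono Set.inter_subset_right
  have h2 : volume I01 = 1 := by simp [Real.volume_Icc]
  rw [h2] at h1
  simpa using ENNReal.toReal_mono (by simp) h1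

lemma term_le_one (hu : Measurable (uncurry u)) (hub : ∀ x y, |u x y| ≤ 1)
    (S T : Set ℝ) :
    |∫ x in S ∩ I01, ∫ y in T ∩ I01, u x y| ≤ 1 := by
  have hinner : ∀ x, |∫ y in T ∩ I01, u x y| ≤ 1 := by
    intro x
    have : ‖∫ y in T ∩ I01, u x y‖ ≤ 1 * (volume (T ∩ I01)).toReal := by
      refine norm_setIntegral_le_of_norm_le_const ?_ (fun y _ => by
        simpa [Real.norm_eq_abs] using hub x y)
      · exact lt_of_le_of_lt (measure_mono Set.inter_subset_right) (by simp [Real.volume_Icc])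
    rw [Real.norm_eq_abs] at this
    exact this.trans (by simpa using vol_inter_le T)
  have : ‖∫ x in S ∩ I01, ∫ y in T ∩ I01, u x y‖ ≤ 1 * (volume (S ∩ I01)).toReal := by
    refine norm_setIntegral_le_of_norm_le_const ?_ (fun x _ => by
      simpa [Real.norm_eq_abs] using hinner x)
    · exact lt_of_le_of_lt (measure_mono Set.inter_subset_right) (by simp [Real.volume_Icc])
  rw [Real.norm_eq_abs] at this
  exact this.trans (by simpa using vol_inter_le S)

lemma cutNorm_bddAbove (hu : Measurable (uncurry u)) (hub : ∀ x y, |u x y| ≤ 1) :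
    BddAbove (Set.range fun p :
        {S : Set ℝ // MeasurableSet S} × {T : Set ℝ // MeasurableSet T} =>
      |∫ x in p.1.1 ∩ Set.Icc (0:ℝ) 1, ∫ y in p.2.1 ∩ Set.Icc (0:ℝ) 1, u x y|) := by
  refine ⟨1, fun r hr => ?_⟩
  obtain ⟨p, rfl⟩ := hr
  exact term_le_one hu hub p.1.1 p.2.1

lemma le_cutNorm (hu : Measurable (uncurry u)) (hub : ∀ x y, |u x y| ≤ 1)
    {S T : Set ℝ} (hS : MeasurableSet S) (hT : MeasurableSet T) :
    |∫ x in S ∩ I01, ∫ y in T ∩ I01, u x y| ≤ cutNorm u :=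
  le_ciSup (cutNorm_bddAbove hu hub) (⟨⟨S, hS⟩, ⟨T, hT⟩⟩ :
    {S : Set ℝ // MeasurableSet S} × {T : Set ℝ // MeasurableSet T})

lemma set_cut_le (hu : Measurable (uncurry u)) (hub : ∀ x y, |u x y| ≤ 1)
    {S T : Set ℝ} (hS : MeasurableSet S) (hT : MeasurableSet T) :
    |∫ y in T, (∫ x in S, u x y ∂mu) ∂mu| ≤ cutNorm u := by
  have hres : ∀ (A : Set ℝ), MeasurableSet A → mu.restrict A = volume.restrict (A ∩ I01) :=
    fun A hA => Measure.restrict_restrict hA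
  have hswap : (∫ y in T, (∫ x in S, u x y ∂mu) ∂mu) =
      ∫ x in S, (∫ y in T, u x y ∂mu) ∂mu :=
    integral_integral_swap (integrable_prod_of_bdd (F := fun y x => u x y)
      (hu.comp measurable_swap) 1 (fun y x => hub x y))
  rw [hswap, hres S hS, hres T hT]
  exact le_cutNorm hu hub hS hT

lemma part_bound (hu : Measurable (uncurry u)) (hub : ∀ x y, |u x y| ≤ 1)
    {S : Set ℝ} (hS : MeasurableSet S) {h : ℝ → ℝ} (hh : Measurable h) {Mh : ℝ}
    (hhb : ∀ y, |h y| ≤ Mh) :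
    |∫ x in S, (∫ y, u x y * h y ∂mu) ∂mu| ≤ Mh * (2 * cutNorm u) := by
  have hswap : ∫ x in S, (∫ y, u x y * h y ∂mu) ∂mu
      = ∫ y, (∫ x in S, u x y ∂mu) * h y ∂mu := by
    rw [integral_integral_swap (integrable_prod_of_bdd (F := fun x y => u x y * h y)
      (hu.mul (hh.comp measurable_snd)) (1 * Mh)
      (fun x y => by
        rw [abs_mul]
        exact mul_le_mul (hub x y) (hhb y) (abs_nonneg _) zero_le_one))]
    exact integral_congr_ae (ae_of_all _ (fun y => integral_mul_const (h y) _))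
  rw [hswap]
  set k : ℝ → ℝ := fun y => ∫ x in S, u x y ∂mu with hk
  have hkm : Measurable k := by
    have hsm : StronglyMeasurable fun y => ∫ x, u x y ∂(mu.restrict S) :=
      ((hu.comp measurable_swap).stronglyMeasurable.integral_prod_right')
    exact hsm.measurable
  have hkb : ∀ y, |k y| ≤ 1 := by
    intro y
    have : ‖∫ x in S, u x y ∂mu‖ ≤ 1 * ((mu.restrict S) Set.univ).toReal :=
      norm_integral_le_of_norm_le_const (ae_of_all _ (fun x => by
        simpa [Real.norm_eq_abs] using hub x y))
    rw [Real.norm_eq_abs] at this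
    refine this.trans ?_
    rw [one_mul]
    have h1 : (mu.restrict S) Set.univ ≤ mu Set.univ := by
      rw [Measure.restrict_apply_univ]
      exact measure_mono (Set.subset_univ S)
    have h2 : mu Set.univ = 1 := measure_univ
    rw [h2] at h1
    simpa using ENNReal.toReal_mono (by simp) h1
  have hki : Integrable k mu := integrable_of_bdd hkm.aestronglyMeasurable 1 hkb
  have := abs_integral_mul_le2 hkm hki hh hhb
  refine this.trans ?_
  have hP : MeasurableSet {y : ℝ | 0 ≤ k y} := measurableSet_le measurable_const hkm
  have b1 : |∫ y in {y | 0 ≤ k y}, k y ∂mu| ≤ cutNorm u := set_cut_le hu hub hS hP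
  have b2 : |∫ y in {y | 0 ≤ k y}ᶜ, k y ∂mu| ≤ cutNorm u := set_cut_le hu hub hS hP.compl
  have hMh0 : 0 ≤ Mh := le_trans (abs_nonneg _) (hhb 0)
  nlinarith

lemma cut_bilinear (hu : Measurable (uncurry u)) (hub : ∀ x y, |u x y| ≤ 1)
    {g h : ℝ → ℝ} (hg : Measurable g) (hh : Measurable h) {Mg Mh : ℝ}
    (hgb : ∀ x, |g x| ≤ Mg) (hhb : ∀ y, |h y| ≤ Mh) :
    |∫ z, u z.1 z.2 * g z.1 * h z.2 ∂(mu.prod mu)| ≤ 4 * (Mg * Mh) * cutNorm u := by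
  have hMg0 : 0 ≤ Mg := le_trans (abs_nonneg _) (hgb 0)
  have hMh0 : 0 ≤ Mh := le_trans (abs_nonneg _) (hhb 0)
  have hint : Integrable (uncurry fun x y => u x y * g x * h y) (mu.prod mu) :=
    integrable_prod_of_bdd
      ((hu.mul (hg.comp measurable_fst)).mul (hh.comp measurable_snd)) (1 * Mg * Mh)
      (fun x y => by
        rw [abs_mul, abs_mul]
        exact mul_le_mul (mul_le_mul (hub x y) (hgb x) (abs_nonneg _) zero_le_one)
          (hhb y) (abs_nonneg _) (by positivity))
  have hprod : ∫ z, u z.1 z.2 * g z.1 * h z.2 ∂(mu.prod mu)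
      = ∫ x, (∫ y, u x y * h y ∂mu) * g x ∂mu := by
    rw [← integral_integral hint]
    refine integral_congr_ae (ae_of_all _ (fun x => ?_))
    dsimp only
    rw [← integral_mul_const]
    exact integral_congr_ae (ae_of_all _ (fun y => by ring))
  rw [hprod]
  set m : ℝ → ℝ := fun x => ∫ y, u x y * h y ∂mu with hm
  have hmm : Measurable m :=
    ((hu.mul (hh.comp measurable_snd)).stronglyMeasurable.integral_prod_right').measurable
  have hmb : ∀ x, |m x| ≤ Mh := by
    intro x
    have : ‖∫ y, u x y * h y ∂mu‖ ≤ (1 * Mh) * (mu Set.univ).toReal :=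
      norm_integral_le_of_norm_le_const (ae_of_all _ (fun y => by
        rw [Real.norm_eq_abs, abs_mul]
        exact mul_le_mul (hub x y) (hhb y) (abs_nonneg _) zero_le_one))
    rw [Real.norm_eq_abs] at this
    simpa using this
  have hmi : Integrable m mu := integrable_of_bdd hmm.aestronglyMeasurable Mh hmb
  have := abs_integral_mul_le2 hmm hmi hg hgb
  refine this.trans ?_
  have hP : MeasurableSet {x : ℝ | 0 ≤ m x} := measurableSet_le measurable_const hmm
  have b1 := part_bound hu hub hP hh hhb
  have b2 := part_bound hu hub hP.compl hh hhb
  have e1 : |∫ x in {x | 0 ≤ m x}, m x ∂mu| ≤ Mh * (2 * cutNorm u) := b1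
  have e2 : |∫ x in {x | 0 ≤ m x}ᶜ, m x ∂mu| ≤ Mh * (2 * cutNorm u) := b2
  nlinarith

lemma abs_P_le (hu : Measurable (uncurry u)) (hub : ∀ x y, |u x y| ≤ 1)
    {g h : ℝ → ℝ} (hg : Integrable g mu) (hh : Integrable h mu) :
    |∫ z, u z.1 z.2 * g z.1 * h z.2 ∂(mu.prod mu)| ≤
      (∫ x, |g x| ∂mu) * ∫ y, |h y| ∂mu := by
  have hgh : Integrable (fun z : ℝ × ℝ => g z.1 * h z.2) (mu.prod mu) := hg.mul_prod hh
  have hint : Integrable (fun z : ℝ × ℝ => u z.1 z.2 * g z.1 * h z.2) (mu.prod mu) := by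
    have := hgh.bdd_mul (c := 1) (f := fun z : ℝ × ℝ => u z.1 z.2)
      hu.aestronglyMeasurable (ae_of_all _ (fun z => by
        simpa [Real.norm_eq_abs] using hub z.1 z.2))
    refine this.congr (ae_of_all _ (fun z => by ring))
  calc |∫ z, u z.1 z.2 * g z.1 * h z.2 ∂(mu.prod mu)|
      ≤ ∫ z, |u z.1 z.2 * g z.1 * h z.2| ∂(mu.prod mu) := by
        have := norm_integral_le_integral_norm (μ := mu.prod mu)
          (fun z : ℝ × ℝ => u z.1 z.2 * g z.1 * h z.2)
        rw [Real.norm_eq_abs] at this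
        refine this.trans_eq (integral_congr_ae (ae_of_all _ (fun z => ?_)))
        simp [Real.norm_eq_abs, abs_mul]
    _ ≤ ∫ z : ℝ × ℝ, |g z.1| * |h z.2| ∂(mu.prod mu) := by
        refine integral_mono hint.abs (hg.abs.mul_prod hh.abs) (fun z => ?_)
        calc |u z.1 z.2 * g z.1 * h z.2| = |u z.1 z.2| * (|g z.1| * |h z.2|) := by
              rw [abs_mul, abs_mul]; ring
          _ ≤ 1 * (|g z.1| * |h z.2|) :=
              mul_le_mul_of_nonneg_right (hub z.1 z.2) (by positivity)
          _ = |g z.1| * |h z.2| := one_mul _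
    _ = (∫ x, |g x| ∂mu) * ∫ y, |h y| ∂mu :=
        integral_prod_mul (fun x => |g x|) (fun y => |h y|)


lemma Pform_integrable (hu : Measurable (uncurry u)) (hub : ∀ x y, |u x y| ≤ 1)
    {g h : ℝ → ℝ} (hg : Integrable g mu) (hh : Integrable h mu) :
    Integrable (fun z : ℝ × ℝ => u z.1 z.2 * g z.1 * h z.2) (mu.prod mu) := by
  have := (hg.mul_prod hh).bdd_mul (c := 1) (f := fun z : ℝ × ℝ => u z.1 z.2)
    hu.aestronglyMeasurable (ae_of_all _ (fun z => by
      simpa [Real.norm_eq_abs] using hub z.1 z.2))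
  exact this.congr (ae_of_all _ (fun z => by ring))

/-- subtraction in the kernel argument -/
lemma Pform_sub_ker {v₁ v₂ : ℝ → ℝ → ℝ} (h₁ : Measurable (uncurry v₁))
    (hb₁ : ∀ x y, |v₁ x y| ≤ 1) (h₂ : Measurable (uncurry v₂)) (hb₂ : ∀ x y, |v₂ x y| ≤ 1)
    {g h : ℝ → ℝ} (hg : Integrable g mu) (hh : Integrable h mu) :
    ∫ z, (v₁ z.1 z.2 - v₂ z.1 z.2) * g z.1 * h z.2 ∂(mu.prod mu)
      = (∫ z, v₁ z.1 z.2 * g z.1 * h z.2 ∂(mu.prod mu))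
        - ∫ z, v₂ z.1 z.2 * g z.1 * h z.2 ∂(mu.prod mu) := by
  rw [← integral_sub (Pform_integrable h₁ hb₁ hg hh) (Pform_integrable h₂ hb₂ hg hh)]
  exact integral_congr_ae (ae_of_all _ (fun z => by ring))

/-- subtraction in the first function argument -/
lemma Pform_sub_g (hu : Measurable (uncurry u)) (hub : ∀ x y, |u x y| ≤ 1)
    {g₁ g₂ h : ℝ → ℝ} (hg₁ : Integrable g₁ mu) (hg₂ : Integrable g₂ mu)
    (hh : Integrable h mu) :
    ∫ z, u z.1 z.2 * (g₁ z.1 - g₂ z.1) * h z.2 ∂(mu.prod mu)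
      = (∫ z, u z.1 z.2 * g₁ z.1 * h z.2 ∂(mu.prod mu))
        - ∫ z, u z.1 z.2 * g₂ z.1 * h z.2 ∂(mu.prod mu) := by
  rw [← integral_sub (Pform_integrable hu hub hg₁ hh) (Pform_integrable hu hub hg₂ hh)]
  exact integral_congr_ae (ae_of_all _ (fun z => by ring))

/-- split of the symmetric difference -/
lemma Pform_split (hu : Measurable (uncurry u)) (hub : ∀ x y, |u x y| ≤ 1)
    {g₁ g₂ : ℝ → ℝ} (hg₁ : Integrable g₁ mu) (hg₂ : Integrable g₂ mu) :
    (∫ z, u z.1 z.2 * g₁ z.1 * g₁ z.2 ∂(mu.prod mu))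
        - ∫ z, u z.1 z.2 * g₂ z.1 * g₂ z.2 ∂(mu.prod mu)
      = (∫ z, u z.1 z.2 * (g₁ z.1 - g₂ z.1) * g₁ z.2 ∂(mu.prod mu))
        + ∫ z, u z.1 z.2 * g₂ z.1 * (g₁ z.2 - g₂ z.2) ∂(mu.prod mu) := by
  have e1 : ∫ z, u z.1 z.2 * (g₁ z.1 - g₂ z.1) * g₁ z.2 ∂(mu.prod mu)
      = (∫ z, u z.1 z.2 * g₁ z.1 * g₁ z.2 ∂(mu.prod mu))
        - ∫ z, u z.1 z.2 * g₂ z.1 * g₁ z.2 ∂(mu.prod mu) :=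
    Pform_sub_g hu hub hg₁ hg₂ hg₁
  have e2 : ∫ z, u z.1 z.2 * g₂ z.1 * (g₁ z.2 - g₂ z.2) ∂(mu.prod mu)
      = (∫ z, u z.1 z.2 * g₂ z.1 * g₁ z.2 ∂(mu.prod mu))
        - ∫ z, u z.1 z.2 * g₂ z.1 * g₂ z.2 ∂(mu.prod mu) := by
    rw [← integral_sub (Pform_integrable hu hub hg₂ hg₁) (Pform_integrable hu hub hg₂ hg₂)]
    exact integral_congr_ae (ae_of_all _ (fun z => by ring))
  rw [e1, e2]; ring

/-- Representation of the quadratic form of the graphon Laplacian. -/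
lemma inner_repr {v : ℝ → ℝ → ℝ} (hv : Measurable (uncurry v)) (hvb : ∀ x y, |v x y| ≤ 1)
    (f : Lp ℝ 2 mu) (Tf : Lp ℝ 2 mu)
    (hae : (Tf : ℝ → ℝ) =ᵐ[mu] fun x => ∫ y in I01, v x y * (f x - f y))
    (hFF : Integrable (fun x => f x * f x) mu) :
    ⟪Tf, f⟫_ℝ = (∫ z, v z.1 z.2 * ((f : ℝ → ℝ) z.1 * (f : ℝ → ℝ) z.1) * (1:ℝ) ∂(mu.prod mu))
      - ∫ z, v z.1 z.2 * (f : ℝ → ℝ) z.1 * (f : ℝ → ℝ) z.2 ∂(mu.prod mu) := by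
  have hFi : Integrable (⇑f) mu := (Lp.memLp f).integrable (by norm_num)
  have h1 : Integrable (fun z : ℝ × ℝ =>
      v z.1 z.2 * ((f : ℝ → ℝ) z.1 * (f : ℝ → ℝ) z.1) * (1:ℝ)) (mu.prod mu) :=
    Pform_integrable hv hvb hFF (integrable_const 1)
  have h2 : Integrable (fun z : ℝ × ℝ =>
      v z.1 z.2 * (f : ℝ → ℝ) z.1 * (f : ℝ → ℝ) z.2) (mu.prod mu) :=
    Pform_integrable hv hvb hFi hFi
  have hQ : Integrable (uncurry fun x y => v x y * (f x - f y) * f x) (mu.prod mu) :=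
    (h1.sub h2).congr (ae_of_all _ (fun z => by simp [uncurry]; ring))
  have step1 : ⟪Tf, f⟫_ℝ = ∫ x, Tf x * f x ∂mu := by
    rw [L2.inner_def]; simp [RCLike.inner_apply]
    exact integral_congr_ae (ae_of_all _ (fun x => mul_comm _ _))
  have step2 : (fun x => Tf x * (f : ℝ → ℝ) x)
      =ᵐ[mu] fun x => (∫ y, v x y * (f x - f y) ∂mu) * f x :=
    hae.mul EventuallyEq.rfl
  have step3 : ∫ x, (∫ y, v x y * (f x - f y) ∂mu) * f x ∂mu
      = ∫ x, ∫ y, v x y * (f x - f y) * f x ∂mu ∂mu :=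
    integral_congr_ae (ae_of_all _ (fun x => (integral_mul_const _ _).symm))
  have step4 : ∫ x, ∫ y, v x y * (f x - f y) * f x ∂mu ∂mu
      = ∫ z, v z.1 z.2 * (f z.1 - f z.2) * f z.1 ∂(mu.prod mu) := integral_integral hQ
  have step5 : ∫ z, v z.1 z.2 * (f z.1 - f z.2) * f z.1 ∂(mu.prod mu)
      = (∫ z, v z.1 z.2 * ((f : ℝ → ℝ) z.1 * (f : ℝ → ℝ) z.1) * (1:ℝ) ∂(mu.prod mu))
        - ∫ z, v z.1 z.2 * (f : ℝ → ℝ) z.1 * (f : ℝ → ℝ) z.2 ∂(mu.prod mu) := by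
    rw [← integral_sub h1 h2]
    exact integral_congr_ae (ae_of_all _ (fun z => by ring))
  rw [step1, integral_congr_ae step2, step3, step4, step5]

/-- truncation at level `M` -/
def trunc (M : ℕ) (F : ℝ → ℝ) : ℝ → ℝ := fun x => max (-(M:ℝ)) (min (M:ℝ) (F x))

lemma trunc_measurable (M : ℕ) {F : ℝ → ℝ} (hF : Measurable F) :
    Measurable (trunc M F) :=
  measurable_const.max (measurable_const.min hF)

lemma abs_trunc_le (M : ℕ) (F : ℝ → ℝ) (x : ℝ) : |trunc M F x| ≤ (M:ℝ) := by
  have hM : (0:ℝ) ≤ M := Nat.cast_nonneg M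
  rw [abs_le]
  constructor
  · exact le_max_left _ _
  · exact max_le (by linarith) (min_le_left _ _)

lemma abs_trunc_le_abs (M : ℕ) (F : ℝ → ℝ) (x : ℝ) : |trunc M F x| ≤ |F x| := by
  have hM : (0:ℝ) ≤ M := Nat.cast_nonneg M
  rw [abs_le]
  constructor
  · exact le_max_of_le_right (le_min (by nlinarith [abs_nonneg (F x)]) (neg_abs_le _))
  · exact max_le (by nlinarith [abs_nonneg (F x)]) ((min_le_right _ _).trans (le_abs_self _))

lemma trunc_eventually_eq (F : ℝ → ℝ) (x : ℝ) :
    Tendsto (fun M : ℕ => trunc M F x) atTop (nhds (F x)) := by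
  refine tendsto_atTop_of_eventually_const (i₀ := ⌈|F x|⌉₊) (fun M hM => ?_)
  have h1 : |F x| ≤ (M:ℝ) := (Nat.le_ceil _).trans (by exact_mod_cast hM)
  have h2 : F x ≤ (M:ℝ) := (le_abs_self _).trans h1
  have h3 : -(M:ℝ) ≤ F x := by nlinarith [neg_abs_le (F x)]
  simp [trunc, min_eq_right h2, max_eq_right h3]

lemma tendsto_trunc_L1 {F : ℝ → ℝ} (hF : Measurable F) (hFi : Integrable F mu) :
    Tendsto (fun M : ℕ => ∫ x, |F x - trunc M F x| ∂mu) atTop (nhds 0) := by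
  have h0 : (0:ℝ) = ∫ x, (0:ℝ) ∂mu := by simp
  rw [h0]
  refine tendsto_integral_of_dominated_convergence (fun x => 2 * |F x|)
    (fun M => ((hF.sub (trunc_measurable M hF)).abs).aestronglyMeasurable)
    (hFi.abs.const_mul 2)
    (fun M => ae_of_all _ (fun x => ?_))
    (ae_of_all _ (fun x => ?_))
  · have := abs_trunc_le_abs M F x
    have h1 : |F x - trunc M F x| ≤ |F x| + |trunc M F x| := abs_sub _ _
    rw [Real.norm_eq_abs, abs_abs]
    linarith
  · have ht := trunc_eventually_eq F x
    have := ((tendsto_const_nhds (x := F x)).sub ht).abs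
    simpa using this

lemma tendsto_trunc_sq_L1 {F : ℝ → ℝ} (hF : Measurable F)
    (hFF : Integrable (fun x => F x * F x) mu) :
    Tendsto (fun M : ℕ => ∫ x, |F x * F x - trunc M F x * trunc M F x| ∂mu) atTop
      (nhds 0) := by
  have h0 : (0:ℝ) = ∫ x, (0:ℝ) ∂mu := by simp
  rw [h0]
  refine tendsto_integral_of_dominated_convergence (fun x => 2 * |F x * F x|)
    (fun M => (((hF.mul hF).sub
      ((trunc_measurable M hF).mul (trunc_measurable M hF))).abs).aestronglyMeasurable)
    (hFF.abs.const_mul 2)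
    (fun M => ae_of_all _ (fun x => ?_))
    (ae_of_all _ (fun x => ?_))
  · have h2 := abs_trunc_le_abs M F x
    have h3 : |trunc M F x * trunc M F x| ≤ |F x * F x| := by
      rw [abs_mul, abs_mul]
      exact mul_le_mul h2 h2 (abs_nonneg _) (abs_nonneg _)
    have h1 : |F x * F x - trunc M F x * trunc M F x|
        ≤ |F x * F x| + |trunc M F x * trunc M F x| := abs_sub _ _
    rw [Real.norm_eq_abs, abs_abs]
    linarith
  · have ht := trunc_eventually_eq F x
    have := ((tendsto_const_nhds (x := F x * F x)).sub (ht.mul ht)).abs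
    simpa using this


/-- The central estimate: the difference of quadratic forms is controlled by the cut norm
plus truncation errors. -/
lemma main_estimate (u : ℝ → ℝ → ℝ) (hu : Measurable (uncurry u)) (hub : ∀ x y, |u x y| ≤ 1)
    {F : ℝ → ℝ} (hF : Measurable F) (hFi : Integrable F mu)
    (hFF : Integrable (fun x => F x * F x) mu) (M : ℕ) :
    |(∫ z, u z.1 z.2 * (F z.1 * F z.1) * (1:ℝ) ∂(mu.prod mu))
        - ∫ z, u z.1 z.2 * F z.1 * F z.2 ∂(mu.prod mu)|
      ≤ 8 * ((M:ℝ) * (M:ℝ)) * cutNorm u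
        + ((∫ x, |F x * F x - trunc M F x * trunc M F x| ∂mu)
            + 2 * (∫ x, |F x| ∂mu) * ∫ x, |F x - trunc M F x| ∂mu) := by
  set G : ℝ → ℝ := trunc M F with hG
  have hGm : Measurable G := trunc_measurable M hF
  have hGi : Integrable G mu := integrable_of_bdd hGm.aestronglyMeasurable M (abs_trunc_le M F)
  have hGsq : ∀ x, |G x * G x| ≤ (M:ℝ) * (M:ℝ) := by
    intro x
    rw [abs_mul]
    exact mul_le_mul (abs_trunc_le M F x) (abs_trunc_le M F x) (abs_nonneg _) (Nat.cast_nonneg M)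
  have hGG : Integrable (fun x => G x * G x) mu :=
    integrable_of_bdd (hGm.mul hGm).aestronglyMeasurable ((M:ℝ) * (M:ℝ)) hGsq
  have e1 : (∫ z, u z.1 z.2 * (F z.1 * F z.1) * (1:ℝ) ∂(mu.prod mu))
      - (∫ z, u z.1 z.2 * (G z.1 * G z.1) * (1:ℝ) ∂(mu.prod mu))
      = ∫ z, u z.1 z.2 * ((F z.1 * F z.1) - (G z.1 * G z.1)) * (1:ℝ) ∂(mu.prod mu) :=
    (Pform_sub_g hu hub hFF hGG (integrable_const 1)).symm
  have b1 : |(∫ z, u z.1 z.2 * (F z.1 * F z.1) * (1:ℝ) ∂(mu.prod mu))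
      - (∫ z, u z.1 z.2 * (G z.1 * G z.1) * (1:ℝ) ∂(mu.prod mu))|
      ≤ (∫ x, |F x * F x - G x * G x| ∂mu) * ∫ y : ℝ, |(1:ℝ)| ∂mu := by
    rw [e1]
    exact abs_P_le hu hub (hFF.sub hGG) (integrable_const 1)
  have i1 : ∫ y : ℝ, |(1:ℝ)| ∂mu = 1 := by simp
  rw [i1, mul_one] at b1
  have b2 : |∫ z, u z.1 z.2 * (G z.1 * G z.1) * (1:ℝ) ∂(mu.prod mu)|
      ≤ 4 * (((M:ℝ) * (M:ℝ)) * 1) * cutNorm u :=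
    cut_bilinear hu hub (hGm.mul hGm) measurable_const hGsq (fun _ : ℝ => by norm_num)
  have b5 : |∫ z, u z.1 z.2 * G z.1 * G z.2 ∂(mu.prod mu)|
      ≤ 4 * ((M:ℝ) * (M:ℝ)) * cutNorm u := by
    have := cut_bilinear hu hub hGm hGm (abs_trunc_le M F) (abs_trunc_le M F)
    exact this
  have split : (∫ z, u z.1 z.2 * F z.1 * F z.2 ∂(mu.prod mu))
      - (∫ z, u z.1 z.2 * G z.1 * G z.2 ∂(mu.prod mu))
      = (∫ z, u z.1 z.2 * (F z.1 - G z.1) * F z.2 ∂(mu.prod mu))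
        + ∫ z, u z.1 z.2 * G z.1 * (F z.2 - G z.2) ∂(mu.prod mu) :=
    Pform_split hu hub hFi hGi
  have b3 : |∫ z, u z.1 z.2 * (F z.1 - G z.1) * F z.2 ∂(mu.prod mu)|
      ≤ (∫ x, |F x - G x| ∂mu) * ∫ x, |F x| ∂mu :=
    abs_P_le hu hub (hFi.sub hGi) hFi
  have b4 : |∫ z, u z.1 z.2 * G z.1 * (F z.2 - G z.2) ∂(mu.prod mu)|
      ≤ (∫ x, |G x| ∂mu) * ∫ x, |F x - G x| ∂mu :=
    abs_P_le hu hub hGi (hFi.sub hGi)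
  have hGle : (∫ x, |G x| ∂mu) ≤ ∫ x, |F x| ∂mu :=
    integral_mono hGi.abs hFi.abs (abs_trunc_le_abs M F)
  have habs : ∀ x : ℝ, (0:ℝ) ≤ |F x - G x| := fun x => abs_nonneg _
  have hd2 : (0:ℝ) ≤ ∫ x, |F x - G x| ∂mu := integral_nonneg habs
  have hb4' : |∫ z, u z.1 z.2 * G z.1 * (F z.2 - G z.2) ∂(mu.prod mu)|
      ≤ (∫ x, |F x| ∂mu) * ∫ x, |F x - G x| ∂mu :=
    b4.trans (mul_le_mul_of_nonneg_right hGle hd2)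
  have tri : |(∫ z, u z.1 z.2 * (F z.1 * F z.1) * (1:ℝ) ∂(mu.prod mu))
        - ∫ z, u z.1 z.2 * F z.1 * F z.2 ∂(mu.prod mu)|
      ≤ |(∫ z, u z.1 z.2 * (F z.1 * F z.1) * (1:ℝ) ∂(mu.prod mu))
          - (∫ z, u z.1 z.2 * (G z.1 * G z.1) * (1:ℝ) ∂(mu.prod mu))|
        + |∫ z, u z.1 z.2 * (G z.1 * G z.1) * (1:ℝ) ∂(mu.prod mu)|
        + |∫ z, u z.1 z.2 * G z.1 * G z.2 ∂(mu.prod mu)|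
        + |(∫ z, u z.1 z.2 * F z.1 * F z.2 ∂(mu.prod mu))
            - ∫ z, u z.1 z.2 * G z.1 * G z.2 ∂(mu.prod mu)| := by
    set A := ∫ z, u z.1 z.2 * (F z.1 * F z.1) * (1:ℝ) ∂(mu.prod mu)
    set B := ∫ z, u z.1 z.2 * (G z.1 * G z.1) * (1:ℝ) ∂(mu.prod mu)
    set C := ∫ z, u z.1 z.2 * F z.1 * F z.2 ∂(mu.prod mu)
    set D := ∫ z, u z.1 z.2 * G z.1 * G z.2 ∂(mu.prod mu)
    have : A - C = (A - B) + B - D - (C - D) := by ring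
    rw [this]
    calc |(A - B) + B - D - (C - D)| ≤ |(A - B) + B - D| + |C - D| := abs_sub _ _
      _ ≤ |(A - B) + B| + |D| + |C - D| := by linarith [abs_sub ((A - B) + B) D]
      _ ≤ |A - B| + |B| + |D| + |C - D| := by linarith [abs_add_le (A - B) B]
  have bsplit : |(∫ z, u z.1 z.2 * F z.1 * F z.2 ∂(mu.prod mu))
      - ∫ z, u z.1 z.2 * G z.1 * G z.2 ∂(mu.prod mu)|
      ≤ (∫ x, |F x - G x| ∂mu) * (∫ x, |F x| ∂mu)
        + (∫ x, |F x| ∂mu) * ∫ x, |F x - G x| ∂mu := by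
    rw [split]
    exact (abs_add_le _ _).trans (add_le_add b3 hb4')
  calc |(∫ z, u z.1 z.2 * (F z.1 * F z.1) * (1:ℝ) ∂(mu.prod mu))
        - ∫ z, u z.1 z.2 * F z.1 * F z.2 ∂(mu.prod mu)|
      ≤ _ := tri
    _ ≤ 8 * ((M:ℝ) * (M:ℝ)) * cutNorm u
        + ((∫ x, |F x * F x - G x * G x| ∂mu)
            + 2 * (∫ x, |F x| ∂mu) * ∫ x, |F x - G x| ∂mu) := by
        have h2 := b2
        rw [mul_one] at h2
        linarith [b1, h2, b5, bsplit]

end GraphonAux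


/-- Let `w` and `w_n` be graphons with `‖w_n − w‖_□ → 0`.  Then for every
`f ∈ L²[0,1]`, `‖L_{w_n}^{1/2} f‖² → ‖L_w^{1/2} f‖²`; equivalently,
`⟨L_{w_n} f, f⟩ → ⟨L_w f, f⟩`.  Here `R = L_w^{1/2}` and `R_n = L_{w_n}^{1/2}` denote the
positive square roots. -/
theorem sq_norm_sqrt_laplacian_tendsto_of_cutNorm_tendsto_zero
    (w : ℝ → ℝ → ℝ) (hw : IsGraphon w)
    (wn : ℕ → ℝ → ℝ → ℝ) (hwn : ∀ n, IsGraphon (wn n))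
    (hconv : Tendsto (fun n => cutNorm fun x y => wn n x y - w x y) atTop (nhds 0))
    -- the graphon Laplacians
    (L : Lp ℝ 2 (volume.restrict (Set.Icc (0:ℝ) 1)) →L[ℝ]
      Lp ℝ 2 (volume.restrict (Set.Icc (0:ℝ) 1)))
    (Ln : ℕ → Lp ℝ 2 (volume.restrict (Set.Icc (0:ℝ) 1)) →L[ℝ]
      Lp ℝ 2 (volume.restrict (Set.Icc (0:ℝ) 1)))
    (hL : ∀ f : Lp ℝ 2 (volume.restrict (Set.Icc (0:ℝ) 1)),
      (L f : ℝ → ℝ) =ᵐ[volume.restrict (Set.Icc (0:ℝ) 1)]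
        fun x => ∫ y in Set.Icc (0:ℝ) 1, w x y * (f x - f y))
    (hLn : ∀ n (f : Lp ℝ 2 (volume.restrict (Set.Icc (0:ℝ) 1))),
      (Ln n f : ℝ → ℝ) =ᵐ[volume.restrict (Set.Icc (0:ℝ) 1)]
        fun x => ∫ y in Set.Icc (0:ℝ) 1, wn n x y * (f x - f y))
    -- their positive square roots
    (R : Lp ℝ 2 (volume.restrict (Set.Icc (0:ℝ) 1)) →L[ℝ]
      Lp ℝ 2 (volume.restrict (Set.Icc (0:ℝ) 1)))
    (Rn : ℕ → Lp ℝ 2 (volume.restrict (Set.Icc (0:ℝ) 1)) →L[ℝ]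
      Lp ℝ 2 (volume.restrict (Set.Icc (0:ℝ) 1)))
    (hRsa : ∀ f g : Lp ℝ 2 (volume.restrict (Set.Icc (0:ℝ) 1)), ⟪R f, g⟫_ℝ = ⟪f, R g⟫_ℝ)
    (hRpos : ∀ f : Lp ℝ 2 (volume.restrict (Set.Icc (0:ℝ) 1)), 0 ≤ ⟪R f, f⟫_ℝ)
    (hRsq : ∀ f : Lp ℝ 2 (volume.restrict (Set.Icc (0:ℝ) 1)), R (R f) = L f)
    (hRnsa : ∀ n (f g : Lp ℝ 2 (volume.restrict (Set.Icc (0:ℝ) 1))),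
      ⟪Rn n f, g⟫_ℝ = ⟪f, Rn n g⟫_ℝ)
    (hRnpos : ∀ n (f : Lp ℝ 2 (volume.restrict (Set.Icc (0:ℝ) 1))), 0 ≤ ⟪Rn n f, f⟫_ℝ)
    (hRnsq : ∀ n (f : Lp ℝ 2 (volume.restrict (Set.Icc (0:ℝ) 1))), Rn n (Rn n f) = Ln n f)
    (f : Lp ℝ 2 (volume.restrict (Set.Icc (0:ℝ) 1))) :
    Tendsto (fun n => ‖Rn n f‖ ^ 2) atTop (nhds (‖R f‖ ^ 2)) ∧
      Tendsto (fun n => ⟪Ln n f, f⟫_ℝ) atTop (nhds ⟪L f, f⟫_ℝ) := by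
  classical
  have hFmeas : Measurable (⇑f : ℝ → ℝ) := (Lp.stronglyMeasurable f).measurable
  have hFi : Integrable (⇑f) GraphonAux.mu := (Lp.memLp f).integrable (by norm_num)
  have hFF : Integrable (fun x => (f : ℝ → ℝ) x * (f : ℝ → ℝ) x) GraphonAux.mu := by
    have := L2.integrable_inner (𝕜 := ℝ) f f
    have h2 : Integrable (fun x => (f : ℝ → ℝ) x ^ 2) GraphonAux.mu := by
      simpa [RCLike.inner_apply] using this
    simpa [pow_two] using h2
  have hw1 : ∀ x y, |w x y| ≤ 1 := fun x y => by
    obtain ⟨a, b⟩ := hw.2.2 x y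
    rw [abs_le]; exact ⟨by linarith, b⟩
  have hwn1 : ∀ n x y, |wn n x y| ≤ 1 := fun n x y => by
    obtain ⟨a, b⟩ := (hwn n).2.2 x y
    rw [abs_le]; exact ⟨by linarith, b⟩
  have hUm : ∀ n, Measurable (Function.uncurry fun x y => wn n x y - w x y) := fun n =>
    (hwn n).1.sub hw.1
  have hUb : ∀ n, ∀ x y : ℝ, |wn n x y - w x y| ≤ 1 := fun n x y => by
    obtain ⟨a1, a2⟩ := (hwn n).2.2 x y
    obtain ⟨b1, b2⟩ := hw.2.2 x y
    rw [abs_le]; constructor <;> linarith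
  -- representation of the quadratic forms
  have reprL : ⟪L f, f⟫_ℝ =
      (∫ z, w z.1 z.2 * ((f : ℝ → ℝ) z.1 * (f : ℝ → ℝ) z.1) * (1:ℝ)
          ∂(GraphonAux.mu.prod GraphonAux.mu))
        - ∫ z, w z.1 z.2 * (f : ℝ → ℝ) z.1 * (f : ℝ → ℝ) z.2
          ∂(GraphonAux.mu.prod GraphonAux.mu) :=
    GraphonAux.inner_repr hw.1 hw1 f (L f) (hL f) hFF
  have reprLn : ∀ n, ⟪Ln n f, f⟫_ℝ =
      (∫ z, wn n z.1 z.2 * ((f : ℝ → ℝ) z.1 * (f : ℝ → ℝ) z.1) * (1:ℝ)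
          ∂(GraphonAux.mu.prod GraphonAux.mu))
        - ∫ z, wn n z.1 z.2 * (f : ℝ → ℝ) z.1 * (f : ℝ → ℝ) z.2
          ∂(GraphonAux.mu.prod GraphonAux.mu) := fun n =>
    GraphonAux.inner_repr (hwn n).1 (hwn1 n) f (Ln n f) (hLn n f) hFF
  have hdiff : ∀ n, ⟪Ln n f, f⟫_ℝ - ⟪L f, f⟫_ℝ =
      (∫ z, (wn n z.1 z.2 - w z.1 z.2) * ((f : ℝ → ℝ) z.1 * (f : ℝ → ℝ) z.1) * (1:ℝ)
          ∂(GraphonAux.mu.prod GraphonAux.mu))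
        - ∫ z, (wn n z.1 z.2 - w z.1 z.2) * (f : ℝ → ℝ) z.1 * (f : ℝ → ℝ) z.2
          ∂(GraphonAux.mu.prod GraphonAux.mu) := by
    intro n
    have e1 : (∫ z, (wn n z.1 z.2 - w z.1 z.2) * ((f : ℝ → ℝ) z.1 * (f : ℝ → ℝ) z.1) * (1:ℝ)
          ∂(GraphonAux.mu.prod GraphonAux.mu))
        = (∫ z, wn n z.1 z.2 * ((f : ℝ → ℝ) z.1 * (f : ℝ → ℝ) z.1) * (1:ℝ)
            ∂(GraphonAux.mu.prod GraphonAux.mu))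
          - ∫ z, w z.1 z.2 * ((f : ℝ → ℝ) z.1 * (f : ℝ → ℝ) z.1) * (1:ℝ)
            ∂(GraphonAux.mu.prod GraphonAux.mu) :=
      GraphonAux.Pform_sub_ker (hwn n).1 (hwn1 n) hw.1 hw1 hFF (integrable_const 1)
    have e2 : (∫ z, (wn n z.1 z.2 - w z.1 z.2) * (f : ℝ → ℝ) z.1 * (f : ℝ → ℝ) z.2
          ∂(GraphonAux.mu.prod GraphonAux.mu))
        = (∫ z, wn n z.1 z.2 * (f : ℝ → ℝ) z.1 * (f : ℝ → ℝ) z.2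
            ∂(GraphonAux.mu.prod GraphonAux.mu))
          - ∫ z, w z.1 z.2 * (f : ℝ → ℝ) z.1 * (f : ℝ → ℝ) z.2
            ∂(GraphonAux.mu.prod GraphonAux.mu) :=
      GraphonAux.Pform_sub_ker (hwn n).1 (hwn1 n) hw.1 hw1 hFi hFi
    rw [reprLn n, reprL, e1, e2]
    ring
  -- the truncation error tends to zero
  have hδ1 := GraphonAux.tendsto_trunc_sq_L1 hFmeas hFF
  have hδ2 := GraphonAux.tendsto_trunc_L1 hFmeas hFi
  have hδ : Tendsto (fun M : ℕ =>
      (∫ x, |(f : ℝ → ℝ) x * (f : ℝ → ℝ) x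
          - GraphonAux.trunc M (⇑f) x * GraphonAux.trunc M (⇑f) x| ∂GraphonAux.mu)
        + 2 * (∫ x, |(f : ℝ → ℝ) x| ∂GraphonAux.mu)
          * ∫ x, |(f : ℝ → ℝ) x - GraphonAux.trunc M (⇑f) x| ∂GraphonAux.mu)
      atTop (nhds 0) := by
    have := hδ1.add (hδ2.const_mul (2 * ∫ x, |(f : ℝ → ℝ) x| ∂GraphonAux.mu))
    simpa [mul_assoc] using this
  -- the main convergence
  have main : Tendsto (fun n => ⟪Ln n f, f⟫_ℝ) atTop (nhds ⟪L f, f⟫_ℝ) := by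
    have hzero : Tendsto (fun n => ⟪Ln n f, f⟫_ℝ - ⟪L f, f⟫_ℝ) atTop (nhds 0) := by
      rw [Metric.tendsto_atTop]
      intro ε hε
      obtain ⟨M, hM⟩ := Metric.tendsto_atTop.mp hδ (ε/2) (half_pos hε)
      have hδM : (∫ x, |(f : ℝ → ℝ) x * (f : ℝ → ℝ) x
            - GraphonAux.trunc M (⇑f) x * GraphonAux.trunc M (⇑f) x| ∂GraphonAux.mu)
          + 2 * (∫ x, |(f : ℝ → ℝ) x| ∂GraphonAux.mu)
            * (∫ x, |(f : ℝ → ℝ) x - GraphonAux.trunc M (⇑f) x| ∂GraphonAux.mu) < ε/2 := by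
        have := hM M le_rfl
        rw [Real.dist_eq, sub_zero] at this
        exact (le_abs_self _).trans_lt this
      have hden : (0:ℝ) < 8 * ((M:ℝ) * (M:ℝ)) + 1 := by positivity
      have hηpos : 0 < (ε/2) / (8 * ((M:ℝ) * (M:ℝ)) + 1) := div_pos (half_pos hε) hden
      obtain ⟨N, hN⟩ := Metric.tendsto_atTop.mp hconv _ hηpos
      refine ⟨N, fun n hn => ?_⟩
      rw [Real.dist_eq, sub_zero, hdiff n]
      have hc : cutNorm (fun x y => wn n x y - w x y)
          < (ε/2) / (8 * ((M:ℝ) * (M:ℝ)) + 1) := by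
        have := hN n hn
        rw [Real.dist_eq, sub_zero] at this
        exact (le_abs_self _).trans_lt this
      have est : |(∫ z, (wn n z.1 z.2 - w z.1 z.2)
              * ((f : ℝ → ℝ) z.1 * (f : ℝ → ℝ) z.1) * (1:ℝ)
              ∂(GraphonAux.mu.prod GraphonAux.mu))
            - ∫ z, (wn n z.1 z.2 - w z.1 z.2) * (f : ℝ → ℝ) z.1 * (f : ℝ → ℝ) z.2
              ∂(GraphonAux.mu.prod GraphonAux.mu)|
          ≤ 8 * ((M:ℝ) * (M:ℝ)) * cutNorm (fun x y => wn n x y - w x y)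
            + ((∫ x, |(f : ℝ → ℝ) x * (f : ℝ → ℝ) x
                - GraphonAux.trunc M (⇑f) x * GraphonAux.trunc M (⇑f) x| ∂GraphonAux.mu)
              + 2 * (∫ x, |(f : ℝ → ℝ) x| ∂GraphonAux.mu)
                * ∫ x, |(f : ℝ → ℝ) x - GraphonAux.trunc M (⇑f) x| ∂GraphonAux.mu) :=
        GraphonAux.main_estimate (fun x y => wn n x y - w x y) (hUm n) (hUb n)
          hFmeas hFi hFF M
      have hMnn : (0:ℝ) ≤ 8 * ((M:ℝ) * (M:ℝ)) := by positivity
      have h8 : 8 * ((M:ℝ) * (M:ℝ)) * cutNorm (fun x y => wn n x y - w x y)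
          ≤ 8 * ((M:ℝ) * (M:ℝ)) * ((ε/2) / (8 * ((M:ℝ) * (M:ℝ)) + 1)) :=
        mul_le_mul_of_nonneg_left hc.le hMnn
      have heq : (8 * ((M:ℝ) * (M:ℝ)) + 1) * ((ε/2) / (8 * ((M:ℝ) * (M:ℝ)) + 1)) = ε/2 := by
        field_simp
      have hle : 8 * ((M:ℝ) * (M:ℝ)) * ((ε/2) / (8 * ((M:ℝ) * (M:ℝ)) + 1)) ≤ ε/2 := by
        nlinarith [hηpos]
      refine lt_of_le_of_lt est ?_
      linarith
    have := hzero.add (tendsto_const_nhds (x := ⟪L f, f⟫_ℝ))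
    simpa using this
  refine ⟨?_, main⟩
  have h1 : (fun n => ‖Rn n f‖ ^ 2) = fun n => ⟪Ln n f, f⟫_ℝ := by
    funext n
    calc ‖Rn n f‖ ^ 2 = ⟪Rn n f, Rn n f⟫_ℝ := (real_inner_self_eq_norm_sq _).symm
      _ = ⟪f, Rn n (Rn n f)⟫_ℝ := hRnsa n f (Rn n f)
      _ = ⟪f, Ln n f⟫_ℝ := by rw [hRnsq n f]
      _ = ⟪Ln n f, f⟫_ℝ := real_inner_comm _ _
  have h2 : ‖R f‖ ^ 2 = ⟪L f, f⟫_ℝ := by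
    calc ‖R f‖ ^ 2 = ⟪R f, R f⟫_ℝ := (real_inner_self_eq_norm_sq _).symm
      _ = ⟪f, R (R f)⟫_ℝ := hRsa f (R f)
      _ = ⟪f, L f⟫_ℝ := by rw [hRsq f]
      _ = ⟪L f, f⟫_ℝ := real_inner_comm _ _
  rw [h1, h2]
  exact main
end GraphonAuxSec
end
end

section
/- Let w and w_n (n ∈ ℕ) be graphons such that ‖w_n − w‖_□ → 0 and ‖d_{w_n} − d_w‖_∞ → 0 as n → ∞. Then ‖L_{w_n} − L_w‖_op → 0 as n → ∞, i.e. the graphon Laplacians converge in operator norm on L²[0,1]. -/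
open MeasureTheory Filter
open scoped ENNReal InnerProductSpace

noncomputable section

/-- The degree function of a graphon: `d_w(x) = ∫₀¹ w(x,y) dy`. -/
def degreeFn (w : ℝ → ℝ → ℝ) (x : ℝ) : ℝ := ∫ y in Set.Icc (0:ℝ) 1, w x y

open Set Function
local notation "Iuv" => Set.Icc (0:ℝ) 1
local notation "μ₀" => MeasureTheory.volume.restrict (Set.Icc (0:ℝ) 1)

namespace Graphon13

instance : IsProbabilityMeasure μ₀ := ⟨by simp [Real.volume_Icc]⟩

lemma integrable_of_bdd {α : Type*} [MeasurableSpace α] {ν : Measure α} [IsFiniteMeasure ν]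
    {v : α → ℝ} {C : ℝ} (hm : AEStronglyMeasurable v ν) (h : ∀ x, |v x| ≤ C) :
    Integrable v ν :=
  Integrable.mono' (integrable_const C) hm (ae_of_all _ fun x => by simpa using h x)

lemma isFinite_restrict (S : Set ℝ) :
    IsFiniteMeasure ((volume : Measure ℝ).restrict (S ∩ Iuv)) := by
  constructor
  rw [Measure.restrict_apply_univ]
  exact lt_of_le_of_lt (measure_mono inter_subset_right) (by simp [Real.volume_Icc])

lemma measure_inter_Icc_le_one (S : Set ℝ) : ((volume : Measure ℝ) (S ∩ Iuv)).toReal ≤ 1 := by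
  have h1 : (volume : Measure ℝ) (S ∩ Iuv) ≤ 1 := by
    calc (volume : Measure ℝ) (S ∩ Iuv) ≤ volume Iuv := measure_mono inter_subset_right
    _ = 1 := by simp [Real.volume_Icc]
  calc ((volume : Measure ℝ) (S ∩ Iuv)).toReal ≤ (1 : ℝ≥0∞).toReal :=
        ENNReal.toReal_mono ENNReal.one_ne_top h1
  _ = 1 := by simp

lemma abs_setIntegral_le {v : ℝ → ℝ} {C : ℝ} (hC : 0 ≤ C) (h : ∀ x, |v x| ≤ C) (S : Set ℝ) :
    |∫ x in S ∩ Iuv, v x| ≤ C := by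
  have := isFinite_restrict S
  have h2 := norm_integral_le_of_norm_le_const (μ := volume.restrict (S ∩ Iuv)) (f := v) (C := C)
    (ae_of_all _ fun x => by simpa using h x)
  rw [measureReal_restrict_apply_univ, measureReal_def] at h2
  calc |∫ x in S ∩ Iuv, v x| ≤ C * ((volume : Measure ℝ) (S ∩ Iuv)).toReal := by
        simpa [Real.norm_eq_abs] using h2
  _ ≤ C * 1 := by
        have := measure_inter_Icc_le_one S
        nlinarith
  _ = C := mul_one C

lemma abs_integral_le_prob {v : ℝ → ℝ} {C : ℝ} (h : ∀ x, |v x| ≤ C) :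
    |∫ x in Iuv, v x| ≤ C := by
  have h2 := norm_integral_le_of_norm_le_const (μ := μ₀) (f := v) (C := C)
    (ae_of_all _ fun x => by simpa using h x)
  simpa [Real.norm_eq_abs, measure_univ] using h2

lemma le_cutNorm {u : ℝ → ℝ → ℝ} (huB : ∀ x y, |u x y| ≤ 1) {S T : Set ℝ}
    (hS : MeasurableSet S) (hT : MeasurableSet T) :
    |∫ x in S ∩ Iuv, ∫ y in T ∩ Iuv, u x y| ≤ cutNorm u := by
  have hbdd : BddAbove (Set.range fun p :
      {S : Set ℝ // MeasurableSet S} × {T : Set ℝ // MeasurableSet T} =>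
      |∫ x in p.1.1 ∩ Iuv, ∫ y in p.2.1 ∩ Iuv, u x y|) := by
    refine ⟨1, ?_⟩
    rintro r ⟨p, rfl⟩
    exact abs_setIntegral_le zero_le_one
      (fun x => abs_setIntegral_le zero_le_one (fun y => huB x y) _) _
  exact le_ciSup hbdd (⟨S, hS⟩, ⟨T, hT⟩)

lemma cutNorm_nonneg {u : ℝ → ℝ → ℝ} (huB : ∀ x y, |u x y| ≤ 1) : 0 ≤ cutNorm u :=
  le_trans (abs_nonneg _) (le_cutNorm huB MeasurableSet.empty MeasurableSet.empty)

lemma ind_int {a : ℝ} (ha : a ≤ 1) :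
    ∫ s in Iuv, (if s < a then (1:ℝ) else 0) = max a 0 := by
  rcases le_or_gt a 0 with h | h
  · rw [max_eq_right h]
    rw [setIntegral_congr_fun measurableSet_Icc (g := fun _ => (0:ℝ))
      (fun s hs => by simp [not_lt.2 (le_trans h hs.1)])]
    simp
  · have key : Set.Iio a ∩ Iuv = Set.Ico 0 a := by
      ext s
      constructor
      · rintro ⟨h1, h2, h3⟩; exact ⟨h2, h1⟩
      · rintro ⟨h1, h2⟩; exact ⟨h2, h1, le_trans h2.le ha⟩
    have hind : (fun s => if s < a then (1:ℝ) else 0)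
        = Set.indicator (Set.Iio a) (fun _ => (1:ℝ)) := by
      ext s; simp [Set.indicator_apply, Set.mem_Iio]
    rw [hind, integral_indicator measurableSet_Iio, Measure.restrict_restrict measurableSet_Iio,
      key]
    simp [Real.volume_Ico, max_eq_left h.le, ENNReal.toReal_ofReal h.le]

def lay (F : ℝ → ℝ) (s x : ℝ) : ℝ := (if s < F x then 1 else 0) - (if s < -F x then 1 else 0)

lemma lay_abs_le (F : ℝ → ℝ) (s x : ℝ) : |lay F s x| ≤ 1 := by
  unfold lay; split_ifs <;> norm_num

lemma lay_measurable {F : ℝ → ℝ} (hF : Measurable F) :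
    Measurable (fun p : ℝ × ℝ => lay F p.1 p.2) := by
  unfold lay
  apply Measurable.sub
  · exact Measurable.ite (measurableSet_lt measurable_fst (hF.comp measurable_snd))
      measurable_const measurable_const
  · exact Measurable.ite (measurableSet_lt measurable_fst ((hF.comp measurable_snd).neg))
      measurable_const measurable_const

lemma integrable_ind (a : ℝ) : Integrable (fun s => if s < a then (1:ℝ) else 0) μ₀ :=
  integrable_of_bdd ((Measurable.ite (measurableSet_lt measurable_id measurable_const)
    measurable_const measurable_const).aestronglyMeasurable)
    (C := 1) (fun s => by split_ifs <;> norm_num)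

lemma integral_lay {F : ℝ → ℝ} (hF : ∀ x, |F x| ≤ 1) (x : ℝ) :
    ∫ s in Iuv, lay F s x = F x := by
  have h1 : F x ≤ 1 := (abs_le.1 (hF x)).2
  have h2 : -F x ≤ 1 := by have := (abs_le.1 (hF x)).1; linarith
  unfold lay
  rw [integral_sub (integrable_ind _) (integrable_ind _), ind_int h1, ind_int h2,
    max_zero_sub_max_neg_zero_eq_self]

lemma abs_mul3 {a b c : ℝ} (ha : |a| ≤ 1) (hb : |b| ≤ 1) (hc : |c| ≤ 1) : |a * b * c| ≤ 1 := by
  rw [abs_mul, abs_mul]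
  have h1 : |a| * |b| ≤ 1 := by nlinarith [abs_nonneg a, abs_nonneg b]
  nlinarith [abs_nonneg c, mul_nonneg (abs_nonneg a) (abs_nonneg b)]

/-- expand an indicator factor into a set integral over `{x | P x} ∩ Iuv` -/
lemma integral_ind_mul {v : ℝ → ℝ} (P : ℝ → Prop) [DecidablePred P]
    (hS : MeasurableSet {x | P x}) :
    ∫ x in Iuv, (if P x then (1:ℝ) else 0) * v x = ∫ x in {x | P x} ∩ Iuv, v x := by
  have h1 : ∀ x, (if P x then (1:ℝ) else 0) * v x = Set.indicator {x | P x} v x := by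
    intro x; by_cases h : P x <;> simp [Set.indicator_apply, h, Set.mem_setOf_eq]
  rw [integral_congr_ae (ae_of_all _ h1), integral_indicator hS,
    Measure.restrict_restrict hS]

lemma bilin_bound {u : ℝ → ℝ → ℝ} (hum : Measurable (uncurry u))
    (huB : ∀ x y, |u x y| ≤ 1) {F G : ℝ → ℝ} (hFm : Measurable F) (hGm : Measurable G)
    (hF : ∀ x, |F x| ≤ 1) (hG : ∀ x, |G x| ≤ 1) :
    |∫ x in Iuv, ∫ y in Iuv, u x y * F x * G y| ≤ 4 * cutNorm u := by
  have hu_x : ∀ x, Measurable (u x) := fun x => hum.comp measurable_prodMk_left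
  set K : ℝ → ℝ → ℝ := fun t x => ∫ y in Iuv, u x y * lay G t y with hK
  have hK_meas : Measurable (fun p : ℝ × ℝ => K p.1 p.2) := by
    have : Measurable (uncurry fun (p : ℝ × ℝ) (y : ℝ) => u p.2 y * lay G p.1 y) := by
      apply Measurable.mul
      · exact hum.comp ((measurable_fst.snd).prodMk measurable_snd)
      · exact (lay_measurable hGm).comp ((measurable_fst.fst).prodMk measurable_snd)
    exact (this.stronglyMeasurable.integral_prod_right (ν := μ₀)).measurable
  have hK_x : ∀ t, Measurable (K t) := fun t =>
    hK_meas.comp (measurable_const.prodMk measurable_id)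
  have hK_bd : ∀ t x, |K t x| ≤ 1 := fun t x =>
    abs_integral_le_prob fun y => by
      rw [abs_mul]
      have := abs_nonneg (u x y); have := abs_nonneg (lay G t y)
      nlinarith [huB x y, lay_abs_le G t y]
  -- step 1 and 2
  have step1 : ∀ x, (∫ y in Iuv, u x y * F x * G y)
      = ∫ t in Iuv, ∫ y in Iuv, u x y * F x * lay G t y := by
    intro x
    have e1 : ∀ y, u x y * F x * G y = ∫ t in Iuv, u x y * F x * lay G t y := fun y => by
      calc u x y * F x * G y = (u x y * F x) * ∫ t in Iuv, lay G t y := by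
            rw [integral_lay hG y]
      _ = ∫ t in Iuv, u x y * F x * lay G t y := (integral_const_mul _ _).symm
    rw [integral_congr_ae (ae_of_all _ e1)]
    apply integral_integral_swap
    apply integrable_of_bdd (C := 1)
    · apply Measurable.aestronglyMeasurable
      apply Measurable.mul
      · exact (((hu_x x).comp measurable_fst).mul_const (F x))
      · exact (lay_measurable hGm).comp (measurable_snd.prodMk measurable_fst)
    · rintro ⟨y, t⟩
      simp only [Function.uncurry_apply_pair]
      exact abs_mul3 (huB x y) (hF x) (lay_abs_le G t y)
  have step2 : (∫ x in Iuv, ∫ y in Iuv, u x y * F x * G y)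
      = ∫ t in Iuv, ∫ x in Iuv, ∫ y in Iuv, u x y * F x * lay G t y := by
    rw [integral_congr_ae (ae_of_all _ step1)]
    apply integral_integral_swap
    apply integrable_of_bdd (C := 1)
    · apply Measurable.aestronglyMeasurable
      have : Measurable (uncurry fun (p : ℝ × ℝ) (y : ℝ) =>
          u p.1 y * F p.1 * lay G p.2 y) := by
        apply Measurable.mul
        · exact (hum.comp ((measurable_fst.fst).prodMk measurable_snd)).mul
            (hFm.comp measurable_fst.fst)
        · exact (lay_measurable hGm).comp ((measurable_fst.snd).prodMk measurable_snd)
      exact (this.stronglyMeasurable.integral_prod_right (ν := μ₀)).measurable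
    · rintro ⟨x, t⟩
      simp only [Function.uncurry_apply_pair]
      exact abs_integral_le_prob fun y => abs_mul3 (huB x y) (hF x) (lay_abs_le G t y)
  -- step 3 : for fixed t rewrite as ∫ s ∫ x lay F s x * K t x
  have step3 : ∀ t, (∫ x in Iuv, ∫ y in Iuv, u x y * F x * lay G t y)
      = ∫ s in Iuv, ∫ x in Iuv, lay F s x * K t x := by
    intro t
    have e3 : ∀ x, (∫ y in Iuv, u x y * F x * lay G t y)
        = ∫ s in Iuv, lay F s x * K t x := by
      intro x
      calc (∫ y in Iuv, u x y * F x * lay G t y)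
          = ∫ y in Iuv, F x * (u x y * lay G t y) := by
            apply integral_congr_ae (ae_of_all _ fun y => by ring)
      _ = F x * K t x := integral_const_mul _ _
      _ = (∫ s in Iuv, lay F s x) * K t x := by rw [integral_lay hF x]
      _ = ∫ s in Iuv, lay F s x * K t x := (integral_mul_const _ _).symm
    rw [integral_congr_ae (ae_of_all _ e3)]
    apply integral_integral_swap
    apply integrable_of_bdd (C := 1)
    · apply Measurable.aestronglyMeasurable
      exact ((lay_measurable hFm).comp (measurable_snd.prodMk measurable_fst)).mul
        ((hK_x t).comp measurable_fst)
    · rintro ⟨x, s⟩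
      simp only [Function.uncurry_apply_pair]
      rw [abs_mul]
      have := abs_nonneg (lay F s x); have := abs_nonneg (K t x)
      nlinarith [lay_abs_le F s x, hK_bd t x]
  -- step 4 : the innermost bound
  have step4 : ∀ t s, |∫ x in Iuv, lay F s x * K t x| ≤ 4 * cutNorm u := by
    intro t s
    set S1 : Set ℝ := {x | s < F x} with hS1d
    set S2 : Set ℝ := {x | s < -F x} with hS2d
    set T1 : Set ℝ := {y | t < G y} with hT1d
    set T2 : Set ℝ := {y | t < -G y} with hT2d
    have hS1 : MeasurableSet S1 := measurableSet_lt measurable_const hFm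
    have hS2 : MeasurableSet S2 := measurableSet_lt measurable_const hFm.neg
    have hT1 : MeasurableSet T1 := measurableSet_lt measurable_const hGm
    have hT2 : MeasurableSet T2 := measurableSet_lt measurable_const hGm.neg
    -- expand K
    have hKeq : ∀ x, K t x = (∫ y in T1 ∩ Iuv, u x y) - ∫ y in T2 ∩ Iuv, u x y := by
      intro x
      have e : ∀ y, u x y * lay G t y
          = (if t < G y then (1:ℝ) else 0) * u x y - (if t < -G y then (1:ℝ) else 0) * u x y := by
        intro y; unfold lay; ring
      have i1 : Integrable (fun y => (if t < G y then (1:ℝ) else 0) * u x y) μ₀ := by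
        apply integrable_of_bdd (C := 1)
        · exact ((Measurable.ite hT1 measurable_const measurable_const).mul (hu_x x)).aestronglyMeasurable
        · intro y; by_cases h : t < G y
          · simpa [h] using huB x y
          · simp [h]
      have i2 : Integrable (fun y => (if t < -G y then (1:ℝ) else 0) * u x y) μ₀ := by
        apply integrable_of_bdd (C := 1)
        · exact ((Measurable.ite hT2 measurable_const measurable_const).mul (hu_x x)).aestronglyMeasurable
        · intro y; by_cases h : t < -G y
          · simpa [h] using huB x y
          · simp [h]
      rw [hK]
      simp only []
      rw [integral_congr_ae (ae_of_all _ e), integral_sub i1 i2,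
        integral_ind_mul (fun y => t < G y) hT1, integral_ind_mul (fun y => t < -G y) hT2]
    -- integrability in x of the two pieces
    haveI := isFinite_restrict T1
    haveI := isFinite_restrict T2
    have hA1m : Measurable (fun x => ∫ y in T1 ∩ Iuv, u x y) :=
      (hum.stronglyMeasurable.integral_prod_right (ν := volume.restrict (T1 ∩ Iuv))).measurable
    have hA2m : Measurable (fun x => ∫ y in T2 ∩ Iuv, u x y) :=
      (hum.stronglyMeasurable.integral_prod_right (ν := volume.restrict (T2 ∩ Iuv))).measurable
    have hA1b : ∀ x, |∫ y in T1 ∩ Iuv, u x y| ≤ 1 := fun x =>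
      abs_setIntegral_le zero_le_one (huB x) T1
    have hA2b : ∀ x, |∫ y in T2 ∩ Iuv, u x y| ≤ 1 := fun x =>
      abs_setIntegral_le zero_le_one (huB x) T2
    -- expand lay F
    have e2 : ∀ x, lay F s x * K t x
        = (if s < F x then (1:ℝ) else 0) * K t x - (if s < -F x then (1:ℝ) else 0) * K t x := by
      intro x; unfold lay; ring
    have j1 : Integrable (fun x => (if s < F x then (1:ℝ) else 0) * K t x) μ₀ := by
      apply integrable_of_bdd (C := 1)
      · exact ((Measurable.ite hS1 measurable_const measurable_const).mul (hK_x t)).aestronglyMeasurable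
      · intro x; by_cases h : s < F x
        · simpa [h] using hK_bd t x
        · simp [h]
    have j2 : Integrable (fun x => (if s < -F x then (1:ℝ) else 0) * K t x) μ₀ := by
      apply integrable_of_bdd (C := 1)
      · exact ((Measurable.ite hS2 measurable_const measurable_const).mul (hK_x t)).aestronglyMeasurable
      · intro x; by_cases h : s < -F x
        · simpa [h] using hK_bd t x
        · simp [h]
    have split1 : (∫ x in Iuv, lay F s x * K t x)
        = (∫ x in S1 ∩ Iuv, K t x) - ∫ x in S2 ∩ Iuv, K t x := by
      rw [integral_congr_ae (ae_of_all _ e2), integral_sub j1 j2,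
        integral_ind_mul (fun x => s < F x) hS1, integral_ind_mul (fun x => s < -F x) hS2]
    have split2 : ∀ (S : Set ℝ), (∫ x in S ∩ Iuv, K t x)
        = (∫ x in S ∩ Iuv, ∫ y in T1 ∩ Iuv, u x y) - ∫ x in S ∩ Iuv, ∫ y in T2 ∩ Iuv, u x y := by
      intro S
      haveI := isFinite_restrict S
      rw [integral_congr_ae (ae_of_all _ hKeq)]
      exact integral_sub
        (integrable_of_bdd hA1m.aestronglyMeasurable hA1b)
        (integrable_of_bdd hA2m.aestronglyMeasurable hA2b)
    rw [split1, split2, split2]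
    have b11 := le_cutNorm huB hS1 hT1
    have b12 := le_cutNorm huB hS1 hT2
    have b21 := le_cutNorm huB hS2 hT1
    have b22 := le_cutNorm huB hS2 hT2
    rw [abs_le]
    obtain ⟨l11, r11⟩ := abs_le.1 b11
    obtain ⟨l12, r12⟩ := abs_le.1 b12
    obtain ⟨l21, r21⟩ := abs_le.1 b21
    obtain ⟨l22, r22⟩ := abs_le.1 b22
    constructor <;> [skip; skip] <;> linarith
  rw [step2]
  refine abs_integral_le_prob fun t => ?_
  rw [step3 t]
  exact abs_integral_le_prob fun s => step4 t s

lemma abs_integral_le_abs {v : ℝ → ℝ} (ν : Measure ℝ) :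
    |∫ x, v x ∂ν| ≤ ∫ x, |v x| ∂ν := by
  simpa [Real.norm_eq_abs] using norm_integral_le_integral_norm (μ := ν) v

lemma l1_le_one {f : ℝ → ℝ} (hm : AEStronglyMeasurable f μ₀)
    (h2i : Integrable (fun x => (f x)^2) μ₀) (h2 : (∫ x in Iuv, (f x)^2) ≤ 1) :
    Integrable f μ₀ ∧ (∫ x in Iuv, |f x|) ≤ 1 := by
  have hdom : Integrable (fun x => ((f x)^2 + 1)/2) μ₀ :=
    (h2i.add (integrable_const 1)).div_const 2
  have hb : ∀ x, |f x| ≤ ((f x)^2 + 1)/2 := fun x => by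
    nlinarith [sq_nonneg (|f x| - 1), sq_abs (f x), abs_nonneg (f x)]
  have hfi : Integrable f μ₀ := hdom.mono' hm (ae_of_all _ fun x => by simpa using hb x)
  refine ⟨hfi, ?_⟩
  calc (∫ x in Iuv, |f x|) ≤ ∫ x in Iuv, ((f x)^2 + 1)/2 := integral_mono hfi.abs hdom hb
  _ = ((∫ x in Iuv, (f x)^2) + ∫ x in Iuv, (1:ℝ))/2 := by
      rw [integral_div, integral_add h2i (integrable_const 1)]
  _ ≤ 1 := by
      have : (∫ x in Iuv, (1:ℝ)) = 1 := by simp [measure_univ]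
      rw [this]; linarith

/-- basic facts about the kernel operator applied to an integrable function -/
lemma Kfacts {u : ℝ → ℝ → ℝ} (hum : Measurable (uncurry u)) (huB : ∀ x y, |u x y| ≤ 1)
    {k : ℝ → ℝ} (hkm : Measurable k) (hki : Integrable k μ₀) :
    Measurable (fun x => ∫ y in Iuv, u x y * k y) ∧
    (∀ x, |∫ y in Iuv, u x y * k y| ≤ ∫ y in Iuv, |k y|) := by
  have hu_x : ∀ x, Measurable (u x) := fun x => hum.comp measurable_prodMk_left
  constructor
  · have hm2 : Measurable (uncurry fun x y => u x y * k y) :=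
      hum.mul (hkm.comp measurable_snd)
    exact (hm2.stronglyMeasurable.integral_prod_right (ν := μ₀)).measurable
  · intro x
    have hint : Integrable (fun y => u x y * k y) μ₀ := by
      refine hki.abs.mono' ((hu_x x).mul hkm).aestronglyMeasurable (ae_of_all _ fun y => ?_)
      simp only [Real.norm_eq_abs, abs_mul]
      nlinarith [huB x y, abs_nonneg (k y), abs_nonneg (u x y)]
    calc |∫ y in Iuv, u x y * k y| ≤ ∫ y in Iuv, |u x y * k y| := by
          exact abs_integral_le_abs _
    _ ≤ ∫ y in Iuv, |k y| := by
          refine integral_mono hint.abs hki.abs fun y => ?_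
          rw [abs_mul]
          nlinarith [huB x y, abs_nonneg (k y), abs_nonneg (u x y)]

lemma B_eq {u : ℝ → ℝ → ℝ} (f k : ℝ → ℝ) :
    (∫ x in Iuv, ∫ y in Iuv, u x y * f x * k y)
      = ∫ x in Iuv, f x * ∫ y in Iuv, u x y * k y := by
  refine integral_congr_ae (ae_of_all _ fun x => ?_)
  calc (∫ y in Iuv, u x y * f x * k y) = ∫ y in Iuv, f x * (u x y * k y) :=
        integral_congr_ae (ae_of_all _ fun y => by ring)
  _ = f x * ∫ y in Iuv, u x y * k y := integral_const_mul _ _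

lemma trunc_facts {M : ℝ} (hM : 1 ≤ M) (c : ℝ) :
    |max (-M) (min M c)| ≤ M ∧ |max (-M) (min M c)| ≤ |c| ∧
      |c - max (-M) (min M c)| ≤ c^2 / M := by
  have hM0 : (0:ℝ) < M := lt_of_lt_of_le one_pos hM
  refine ⟨?_, ?_, ?_⟩
  · rw [abs_le]
    exact ⟨le_max_left _ _, max_le (by linarith) (min_le_left _ _)⟩
  · rcases le_total c M with h1 | h1
    · rcases le_total (-M) c with h2 | h2
      · rw [min_eq_right h1, max_eq_right h2]
      · rw [min_eq_right h1, max_eq_left h2]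
        rw [abs_of_nonpos (by linarith), abs_of_nonpos (by linarith)]
        linarith
    · rw [min_eq_left h1, max_eq_right (by linarith : -M ≤ M)]
      rw [abs_of_pos hM0, abs_of_pos (by linarith : (0:ℝ) < c)]
      linarith
  · rcases le_total c M with h1 | h1
    · rcases le_total (-M) c with h2 | h2
      · rw [min_eq_right h1, max_eq_right h2]
        simp only [sub_self, abs_zero]
        positivity
      · rw [min_eq_right h1, max_eq_left h2]
        rw [abs_of_nonpos (by linarith), le_div_iff₀ hM0]
        nlinarith [sq_nonneg (2*c + M), sq_nonneg M]
    · rw [min_eq_left h1, max_eq_right (by linarith : -M ≤ M)]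
      rw [abs_of_nonneg (by linarith : (0:ℝ) ≤ c - M), le_div_iff₀ hM0]
      nlinarith [sq_nonneg (2*c - M), sq_nonneg M]

lemma bilin_L2 {u : ℝ → ℝ → ℝ} (hum : Measurable (uncurry u)) (huB : ∀ x y, |u x y| ≤ 1)
    {f g : ℝ → ℝ} (hfm : Measurable f) (hgm : Measurable g)
    (hf2i : Integrable (fun x => (f x)^2) μ₀) (hg2i : Integrable (fun x => (g x)^2) μ₀)
    (hf2 : (∫ x in Iuv, (f x)^2) ≤ 1) (hg2 : (∫ x in Iuv, (g x)^2) ≤ 1)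
    {M : ℝ} (hM : 1 ≤ M) :
    |∫ x in Iuv, ∫ y in Iuv, u x y * f x * g y| ≤ 4 * M^2 * cutNorm u + 2 / M := by
  have hM0 : (0:ℝ) < M := lt_of_lt_of_le one_pos hM
  obtain ⟨hfi, hf1⟩ := l1_le_one hfm.aestronglyMeasurable hf2i hf2
  obtain ⟨hgi, hg1⟩ := l1_le_one hgm.aestronglyMeasurable hg2i hg2
  set f1 : ℝ → ℝ := fun x => max (-M) (min M (f x)) with hf1d
  set g1 : ℝ → ℝ := fun y => max (-M) (min M (g y)) with hg1d
  set f2 : ℝ → ℝ := fun x => f x - f1 x with hf2d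
  set g2 : ℝ → ℝ := fun y => g y - g1 y with hg2d
  have hf1m : Measurable f1 := measurable_const.max (measurable_const.min hfm)
  have hg1m : Measurable g1 := measurable_const.max (measurable_const.min hgm)
  have hf2m : Measurable f2 := hfm.sub hf1m
  have hg2m : Measurable g2 := hgm.sub hg1m
  have hf1b : ∀ x, |f1 x| ≤ M := fun x => (trunc_facts hM (f x)).1
  have hg1b : ∀ y, |g1 y| ≤ M := fun y => (trunc_facts hM (g y)).1
  have hf1i : Integrable f1 μ₀ := integrable_of_bdd hf1m.aestronglyMeasurable hf1b
  have hg1i : Integrable g1 μ₀ := integrable_of_bdd hg1m.aestronglyMeasurable hg1b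
  have hf2i' : Integrable f2 μ₀ := hfi.sub hf1i
  have hg2i' : Integrable g2 μ₀ := hgi.sub hg1i
  have htailf : (∫ x in Iuv, |f2 x|) ≤ 1 / M := by
    calc (∫ x in Iuv, |f2 x|) ≤ ∫ x in Iuv, (f x)^2 / M :=
          integral_mono hf2i'.abs (hf2i.div_const M) fun x => (trunc_facts hM (f x)).2.2
    _ = (∫ x in Iuv, (f x)^2) / M := integral_div _ _
    _ ≤ 1 / M := by gcongr
  have htailg : (∫ y in Iuv, |g2 y|) ≤ 1 / M := by
    calc (∫ y in Iuv, |g2 y|) ≤ ∫ y in Iuv, (g y)^2 / M :=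
          integral_mono hg2i'.abs (hg2i.div_const M) fun y => (trunc_facts hM (g y)).2.2
    _ = (∫ y in Iuv, (g y)^2) / M := integral_div _ _
    _ ≤ 1 / M := by gcongr
  -- kernel integrals
  obtain ⟨hKg1m, hKg1b⟩ := Kfacts hum huB hg1m hg1i
  obtain ⟨hKg2m, hKg2b⟩ := Kfacts hum huB hg2m hg2i'
  obtain ⟨hKgm, hKgb⟩ := Kfacts hum huB hgm hgi
  set K1 : ℝ → ℝ := fun x => ∫ y in Iuv, u x y * g1 y with hK1d
  set K2 : ℝ → ℝ := fun x => ∫ y in Iuv, u x y * g2 y with hK2d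
  have hK1b' : ∀ x, |K1 x| ≤ M := fun x => by
    refine le_trans (hKg1b x) ?_
    calc (∫ y in Iuv, |g1 y|) ≤ ∫ y in Iuv, M :=
          integral_mono (integrable_of_bdd hg1m.aestronglyMeasurable hg1b).abs
            (integrable_const M) (fun y => by simpa using hg1b y)
    _ ≤ M := by simp [measure_univ]
  have hK2b' : ∀ x, |K2 x| ≤ 1 / M := fun x => le_trans (hKg2b x) htailg
  have hK1b1 : ∀ x, |K1 x| ≤ 1 := fun x => by
    refine le_trans (hKg1b x) (le_trans ?_ hg1)
    exact integral_mono (integrable_of_bdd hg1m.aestronglyMeasurable hg1b).abs hgi.abs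
      (fun y => (trunc_facts hM (g y)).2.1)
  -- pointwise kernel additivity : K_g = K1 + K2
  have hKadd : ∀ x, (∫ y in Iuv, u x y * g y) = K1 x + K2 x := by
    intro x
    have hu_x : Measurable (u x) := hum.comp measurable_prodMk_left
    have i1 : Integrable (fun y => u x y * g1 y) μ₀ := by
      refine hg1i.abs.mono' (hu_x.mul hg1m).aestronglyMeasurable (ae_of_all _ fun y => ?_)
      simp only [Real.norm_eq_abs, abs_mul]
      nlinarith [huB x y, abs_nonneg (g1 y), abs_nonneg (u x y)]
    have i2 : Integrable (fun y => u x y * g2 y) μ₀ := by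
      refine hg2i'.abs.mono' (hu_x.mul hg2m).aestronglyMeasurable (ae_of_all _ fun y => ?_)
      simp only [Real.norm_eq_abs, abs_mul]
      nlinarith [huB x y, abs_nonneg (g2 y), abs_nonneg (u x y)]
    calc (∫ y in Iuv, u x y * g y) = ∫ y in Iuv, (u x y * g1 y + u x y * g2 y) := by
          refine integral_congr_ae (ae_of_all _ fun y => ?_)
          simp only [hg2d]; ring
    _ = K1 x + K2 x := integral_add i1 i2
  -- main decomposition
  have main : (∫ x in Iuv, ∫ y in Iuv, u x y * f x * g y)
      = (∫ x in Iuv, f1 x * K1 x) + (∫ x in Iuv, f2 x * K1 x) + ∫ x in Iuv, f x * K2 x := by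
    have i1 : Integrable (fun x => f1 x * K1 x) μ₀ := by
      refine integrable_of_bdd (hf1m.mul hKg1m).aestronglyMeasurable (C := M * M) fun x => ?_
      rw [abs_mul]
      nlinarith [hf1b x, hK1b' x, abs_nonneg (f1 x), abs_nonneg (K1 x)]
    have i2 : Integrable (fun x => f2 x * K1 x) μ₀ := by
      refine (hf2i'.abs.const_mul M).mono'
        ((hf2m.mul hKg1m).aestronglyMeasurable) (ae_of_all _ fun x => ?_)
      simp only [Real.norm_eq_abs, abs_mul]
      nlinarith [hK1b' x, abs_nonneg (f2 x), abs_nonneg (K1 x)]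
    have i3 : Integrable (fun x => f x * K2 x) μ₀ := by
      refine (hfi.abs.mul_const (1/M)).mono'
        ((hfm.mul hKg2m).aestronglyMeasurable) (ae_of_all _ fun x => ?_)
      simp only [Real.norm_eq_abs, abs_mul]
      nlinarith [hK2b' x, abs_nonneg (f x), abs_nonneg (K2 x)]
    calc (∫ x in Iuv, ∫ y in Iuv, u x y * f x * g y)
        = ∫ x in Iuv, f x * ∫ y in Iuv, u x y * g y := B_eq f g
    _ = ∫ x in Iuv, (f1 x * K1 x + f2 x * K1 x + f x * K2 x) := by
        refine integral_congr_ae (ae_of_all _ fun x => ?_)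
        show f x * (∫ y in Iuv, u x y * g y) = f1 x * K1 x + f2 x * K1 x + f x * K2 x
        rw [hKadd x]
        simp only [hf2d]; ring
    _ = _ := by
        have e1 : Integrable (fun x => f1 x * K1 x + f2 x * K1 x) μ₀ := i1.add i2
        rw [integral_add e1 i3, integral_add i1 i2]
  -- bound each piece
  have bound1 : |∫ x in Iuv, f1 x * K1 x| ≤ 4 * M^2 * cutNorm u := by
    have hFb : ∀ x, |f1 x / M| ≤ 1 := fun x => by
      rw [abs_div, abs_of_pos hM0, div_le_one hM0]; exact hf1b x
    have hGb : ∀ y, |g1 y / M| ≤ 1 := fun y => by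
      rw [abs_div, abs_of_pos hM0, div_le_one hM0]; exact hg1b y
    have hbb := bilin_bound hum huB (hf1m.div_const M) (hg1m.div_const M) hFb hGb
    have heq : (∫ x in Iuv, f1 x * K1 x)
        = M^2 * ∫ x in Iuv, ∫ y in Iuv, u x y * (f1 x / M) * (g1 y / M) := by
      rw [← integral_const_mul]
      refine integral_congr_ae (ae_of_all _ fun x => ?_)
      show f1 x * K1 x = M ^ 2 * ∫ y in Iuv, u x y * (f1 x / M) * (g1 y / M)
      have hMne : M ≠ 0 := ne_of_gt hM0
      have hpt : ∀ y, u x y * (f1 x / M) * (g1 y / M)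
          = (u x y * g1 y) * (f1 x / M / M) := fun y => by ring
      rw [integral_congr_ae (ae_of_all _ hpt), integral_mul_const]
      have hKx : K1 x = ∫ y in Iuv, u x y * g1 y := rfl
      rw [← hKx]
      field_simp
    rw [heq, abs_mul, abs_of_pos (by positivity : (0:ℝ) < M^2)]
    calc M^2 * |∫ x in Iuv, ∫ y in Iuv, u x y * (f1 x / M) * (g1 y / M)|
        ≤ M^2 * (4 * cutNorm u) := by nlinarith [abs_nonneg (∫ x in Iuv, ∫ y in Iuv, u x y * (f1 x / M) * (g1 y / M))]
    _ = 4 * M^2 * cutNorm u := by ring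
  have bound2 : |∫ x in Iuv, f2 x * K1 x| ≤ 1 / M := by
    have hi : Integrable (fun x => f2 x * K1 x) μ₀ := by
      refine (hf2i'.abs.const_mul M).mono'
        ((hf2m.mul hKg1m).aestronglyMeasurable) (ae_of_all _ fun x => ?_)
      simp only [Real.norm_eq_abs, abs_mul]
      nlinarith [hK1b' x, abs_nonneg (f2 x), abs_nonneg (K1 x)]
    calc |∫ x in Iuv, f2 x * K1 x| ≤ ∫ x in Iuv, |f2 x * K1 x| := by
          exact abs_integral_le_abs _
    _ ≤ ∫ x in Iuv, |f2 x| := by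
          refine integral_mono hi.abs hf2i'.abs fun x => ?_
          rw [abs_mul]
          nlinarith [hK1b1 x, abs_nonneg (f2 x), abs_nonneg (K1 x)]
    _ ≤ 1 / M := htailf
  have bound3 : |∫ x in Iuv, f x * K2 x| ≤ 1 / M := by
    have hi : Integrable (fun x => f x * K2 x) μ₀ := by
      refine (hfi.abs.mul_const (1/M)).mono'
        ((hfm.mul hKg2m).aestronglyMeasurable) (ae_of_all _ fun x => ?_)
      simp only [Real.norm_eq_abs, abs_mul]
      nlinarith [hK2b' x, abs_nonneg (f x), abs_nonneg (K2 x)]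
    calc |∫ x in Iuv, f x * K2 x| ≤ ∫ x in Iuv, |f x * K2 x| := by
          exact abs_integral_le_abs _
    _ ≤ ∫ x in Iuv, |f x| * (1/M) := by
          refine integral_mono hi.abs (hfi.abs.mul_const (1/M)) fun x => ?_
          rw [abs_mul]
          nlinarith [hK2b' x, abs_nonneg (f x), abs_nonneg (K2 x)]
    _ = (∫ x in Iuv, |f x|) * (1/M) := integral_mul_const _ _
    _ ≤ 1 / M := by
          rw [mul_one_div]
          gcongr
  rw [main]
  calc |(∫ x in Iuv, f1 x * K1 x) + (∫ x in Iuv, f2 x * K1 x) + ∫ x in Iuv, f x * K2 x|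
      ≤ |(∫ x in Iuv, f1 x * K1 x) + (∫ x in Iuv, f2 x * K1 x)| + |∫ x in Iuv, f x * K2 x| :=
        abs_add_le _ _
  _ ≤ |∫ x in Iuv, f1 x * K1 x| + |∫ x in Iuv, f2 x * K1 x| + |∫ x in Iuv, f x * K2 x| := by
        have := abs_add_le (∫ x in Iuv, f1 x * K1 x) (∫ x in Iuv, f2 x * K1 x)
        linarith
  _ ≤ 4 * M^2 * cutNorm u + 1/M + 1/M := by linarith
  _ = 4 * M^2 * cutNorm u + 2 / M := by ring

lemma T_bound {u : ℝ → ℝ → ℝ} (hum : Measurable (uncurry u)) (huB : ∀ x y, |u x y| ≤ 1)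
    {f : ℝ → ℝ} (hfm : Measurable f)
    (hf2i : Integrable (fun x => (f x)^2) μ₀) (hf2 : (∫ x in Iuv, (f x)^2) ≤ 1)
    {M : ℝ} (hM : 1 ≤ M) :
    (∫ x in Iuv, (∫ y in Iuv, u x y * f y)^2) ≤ 4 * M^2 * cutNorm u + 2 / M := by
  obtain ⟨hfi, hf1⟩ := l1_le_one hfm.aestronglyMeasurable hf2i hf2
  obtain ⟨hTm, hTb0⟩ := Kfacts hum huB hfm hfi
  set T : ℝ → ℝ := fun x => ∫ y in Iuv, u x y * f y with hTd
  have hTb : ∀ x, |T x| ≤ 1 := fun x => le_trans (hTb0 x) hf1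
  have hT2i : Integrable (fun x => (T x)^2) μ₀ :=
    integrable_of_bdd (C := 1) ((hTm.pow_const 2).aestronglyMeasurable)
      (fun x => by
        rw [abs_of_nonneg (sq_nonneg _)]
        nlinarith [hTb x, sq_abs (T x), abs_nonneg (T x)])
  have hT2 : (∫ x in Iuv, (T x)^2) ≤ 1 := by
    calc (∫ x in Iuv, (T x)^2) ≤ ∫ x in Iuv, (1:ℝ) :=
          integral_mono hT2i (integrable_const 1)
            (fun x => by nlinarith [hTb x, sq_abs (T x), abs_nonneg (T x)])
    _ = 1 := by simp [measure_univ]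
  have key := bilin_L2 hum huB hTm hfm hT2i hf2i hT2 hf2 hM
  have eq : (∫ x in Iuv, (T x)^2) = ∫ x in Iuv, ∫ y in Iuv, u x y * T x * f y := by
    refine integral_congr_ae (ae_of_all _ fun x => ?_)
    have hTx : T x = ∫ y in Iuv, u x y * f y := rfl
    calc (T x)^2 = T x * ∫ y in Iuv, u x y * f y := by rw [hTx]; ring
    _ = ∫ y in Iuv, T x * (u x y * f y) := (integral_const_mul _ _).symm
    _ = ∫ y in Iuv, u x y * T x * f y := integral_congr_ae (ae_of_all _ fun y => by ring)
  calc (∫ x in Iuv, (T x)^2) = |∫ x in Iuv, (T x)^2| :=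
        (abs_of_nonneg (integral_nonneg fun x => sq_nonneg _)).symm
  _ = |∫ x in Iuv, ∫ y in Iuv, u x y * T x * f y| := by rw [eq]
  _ ≤ _ := key
lemma sq_int_le_one {f : Lp ℝ 2 μ₀} (hf : ‖f‖ = 1) {fm : ℝ → ℝ}
    (hfeq : (f : ℝ → ℝ) =ᵐ[μ₀] fm) (hmemfm : MemLp fm 2 μ₀) :
    (∫ x in Iuv, (fm x)^2) ≤ 1 := by
  have hsn : eLpNorm fm 2 μ₀ = 1 := by
    rw [← eLpNorm_congr_ae hfeq, ← ENNReal.ofReal_toReal (Lp.eLpNorm_ne_top f),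
      ← Lp.norm_def, hf]
    simp
  have hrew := hmemfm.eLpNorm_eq_integral_rpow_norm (p := 2) (by norm_num) (by norm_num)
  rw [hsn] at hrew
  have htr : (2:ℝ≥0∞).toReal = 2 := by norm_num
  rw [htr] at hrew
  have hs0 : (0:ℝ) ≤ ∫ a, ‖fm a‖ ^ (2:ℝ) ∂μ₀ :=
    integral_nonneg fun a => by positivity
  have h1 : ((∫ a, ‖fm a‖ ^ (2:ℝ) ∂μ₀) ^ ((2:ℝ)⁻¹)) = 1 := by
    have := hrew.symm
    rwa [ENNReal.ofReal_eq_one] at this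
  have h2 : (∫ a, ‖fm a‖ ^ (2:ℝ) ∂μ₀) = 1 := by
    have hX : ((∫ a, ‖fm a‖ ^ (2:ℝ) ∂μ₀) ^ ((2:ℝ)⁻¹)) ^ (2:ℝ)
        = ∫ a, ‖fm a‖ ^ (2:ℝ) ∂μ₀ := by
      rw [← Real.rpow_mul hs0]
      norm_num
    rw [h1] at hX
    simpa using hX.symm
  have h3 : (∫ a, ‖fm a‖ ^ (2:ℝ) ∂μ₀) = ∫ x in Iuv, (fm x)^2 := by
    refine integral_congr_ae (ae_of_all _ fun x => ?_)
    show ‖fm x‖ ^ (2:ℝ) = (fm x)^2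
    rw [show (2:ℝ) = ((2:ℕ):ℝ) by norm_num, Real.rpow_natCast, Real.norm_eq_abs, sq_abs]
  rw [← h3, h2]

lemma op_bound {u : ℝ → ℝ → ℝ} (hum : Measurable (uncurry u)) (huB : ∀ x y, |u x y| ≤ 1)
    {dd : ℝ → ℝ} (hdd : ∀ x, dd x = ∫ y in Iuv, u x y)
    {a : ℝ} (ha0 : 0 ≤ a) (ha : ∀ᵐ x ∂μ₀, |dd x| ≤ a)
    {D : Lp ℝ 2 μ₀ →L[ℝ] Lp ℝ 2 μ₀}
    (hD : ∀ f : Lp ℝ 2 μ₀, (D f : ℝ → ℝ) =ᵐ[μ₀]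
      fun x => ∫ y in Iuv, u x y * ((f : ℝ → ℝ) x - (f : ℝ → ℝ) y))
    {M : ℝ} (hM : 1 ≤ M) :
    ‖D‖ ≤ a + Real.sqrt (4 * M^2 * cutNorm u + 2/M) := by
  refine ContinuousLinearMap.opNorm_le_of_unit_norm (by positivity) fun f hf => ?_
  have hmemf : MemLp (f : ℝ → ℝ) 2 μ₀ := Lp.memLp f
  have hsm := hmemf.aestronglyMeasurable
  set fm : ℝ → ℝ := hsm.mk (f : ℝ → ℝ) with hfmd
  have hfm_meas : Measurable fm := hsm.stronglyMeasurable_mk.measurable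
  have hfeq : (f : ℝ → ℝ) =ᵐ[μ₀] fm := hsm.ae_eq_mk
  have hmemfm : MemLp fm 2 μ₀ := hmemf.ae_eq hfeq
  have hfm2i : Integrable (fun x => (fm x)^2) μ₀ := hmemfm.integrable_sq
  have hfmi : Integrable fm μ₀ := hmemfm.integrable one_le_two
  have hfci : Integrable (f : ℝ → ℝ) μ₀ := hmemf.integrable one_le_two
  have hint2 : (∫ x in Iuv, (fm x)^2) ≤ 1 := sq_int_le_one hf hfeq hmemfm
  obtain ⟨_, hl1⟩ := l1_le_one hfm_meas.aestronglyMeasurable hfm2i hint2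
  have hux : ∀ x, Measurable (u x) := fun x => hum.comp measurable_prodMk_left
  have hddm : Measurable dd := by
    have h : Measurable fun x => ∫ y in Iuv, u x y :=
      (hum.stronglyMeasurable.integral_prod_right (ν := μ₀)).measurable
    have : dd = fun x => ∫ y in Iuv, u x y := funext hdd
    rw [this]; exact h
  -- identity for D f
  have hstep : ∀ᵐ x ∂μ₀, (∫ y in Iuv, u x y * ((f : ℝ → ℝ) x - (f : ℝ → ℝ) y))
      = dd x * fm x - ∫ y in Iuv, u x y * fm y := by
    filter_upwards [hfeq] with x hx
    have hu_i : Integrable (fun y => u x y) μ₀ :=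
      integrable_of_bdd (hux x).aestronglyMeasurable (huB x)
    have hi1 : Integrable (fun y => u x y * (f : ℝ → ℝ) x) μ₀ := hu_i.mul_const _
    have hi2 : Integrable (fun y => u x y * (f : ℝ → ℝ) y) μ₀ := by
      refine hfci.abs.mono'
        ((hux x).aestronglyMeasurable.mul hmemf.aestronglyMeasurable) (ae_of_all _ fun y => ?_)
      simp only [Real.norm_eq_abs, abs_mul]
      nlinarith [huB x y, abs_nonneg ((f : ℝ → ℝ) y), abs_nonneg (u x y)]
    calc (∫ y in Iuv, u x y * ((f : ℝ → ℝ) x - (f : ℝ → ℝ) y))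
        = ∫ y in Iuv, (u x y * (f : ℝ → ℝ) x - u x y * (f : ℝ → ℝ) y) :=
          integral_congr_ae (ae_of_all _ fun y => by ring)
    _ = (∫ y in Iuv, u x y * (f : ℝ → ℝ) x) - ∫ y in Iuv, u x y * (f : ℝ → ℝ) y :=
          integral_sub hi1 hi2
    _ = (∫ y in Iuv, u x y) * (f : ℝ → ℝ) x - ∫ y in Iuv, u x y * (f : ℝ → ℝ) y := by
          rw [integral_mul_const]
    _ = dd x * fm x - ∫ y in Iuv, u x y * fm y := by
          rw [← hdd x, hx]
          congr 1
          exact integral_congr_ae (hfeq.mono fun y hy => by simp only [hy])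
  have hDf : (D f : ℝ → ℝ) =ᵐ[μ₀] fun x => dd x * fm x - ∫ y in Iuv, u x y * fm y :=
    (hD f).trans hstep
  -- split the L² norm
  set T : ℝ → ℝ := fun x => ∫ y in Iuv, u x y * fm y with hTd
  obtain ⟨hTm, hTb0⟩ := Kfacts hum huB hfm_meas hfmi
  have hTb : ∀ x, |T x| ≤ 1 := fun x => le_trans (hTb0 x) hl1
  have hnormDf : ‖D f‖ = (eLpNorm (fun x => dd x * fm x - T x) 2 μ₀).toReal := by
    rw [Lp.norm_def, eLpNorm_congr_ae hDf]
  have hsplit : eLpNorm (fun x => dd x * fm x - T x) 2 μ₀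
      ≤ eLpNorm (fun x => dd x * fm x) 2 μ₀ + eLpNorm T 2 μ₀ := by
    have hrw : (fun x => dd x * fm x - T x) = (fun x => dd x * fm x) - T := rfl
    rw [hrw]
    exact eLpNorm_sub_le ((hddm.mul hfm_meas).aestronglyMeasurable)
      hTm.aestronglyMeasurable one_le_two
  -- degree part
  have hsn : eLpNorm fm 2 μ₀ = 1 := by
    rw [← eLpNorm_congr_ae hfeq, ← ENNReal.ofReal_toReal (Lp.eLpNorm_ne_top f),
      ← Lp.norm_def, hf]
    simp
  have h1 : eLpNorm (fun x => dd x * fm x) 2 μ₀ ≤ ENNReal.ofReal a := by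
    calc eLpNorm (fun x => dd x * fm x) 2 μ₀ ≤ eLpNorm (fun x => a * fm x) 2 μ₀ := by
          refine eLpNorm_mono_ae ?_
          filter_upwards [ha] with x hx
          simp only [Real.norm_eq_abs, abs_mul, abs_of_nonneg ha0]
          have := abs_nonneg (fm x)
          nlinarith [abs_nonneg (dd x)]
    _ = ‖a‖ₑ * eLpNorm fm 2 μ₀ := by
          have hrw : (fun x => a * fm x) = a • fm := rfl
          rw [hrw, eLpNorm_const_smul]
    _ = ENNReal.ofReal a := by
          rw [hsn, mul_one, ← ofReal_norm, Real.norm_eq_abs, abs_of_nonneg ha0]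
  -- kernel part
  have h2 : eLpNorm T 2 μ₀ ≤ ENNReal.ofReal (Real.sqrt (4 * M^2 * cutNorm u + 2/M)) := by
    have hTint := T_bound hum huB hfm_meas hfm2i hint2 hM
    have hmemT : MemLp T 2 μ₀ := MemLp.of_bound hTm.aestronglyMeasurable 1
      (ae_of_all _ fun x => by simpa using hTb x)
    rw [hmemT.eLpNorm_eq_integral_rpow_norm (by norm_num) (by norm_num)]
    apply ENNReal.ofReal_le_ofReal
    have htr : (2:ℝ≥0∞).toReal = 2 := by norm_num
    rw [htr]
    have h3 : (∫ a, ‖T a‖ ^ (2:ℝ) ∂μ₀) = ∫ x in Iuv, (T x)^2 := by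
      refine integral_congr_ae (ae_of_all _ fun x => ?_)
      show ‖T x‖ ^ (2:ℝ) = (T x)^2
      rw [show (2:ℝ) = ((2:ℕ):ℝ) by norm_num, Real.rpow_natCast, Real.norm_eq_abs, sq_abs]
    rw [h3]
    have hs0 : (0:ℝ) ≤ ∫ x in Iuv, (T x)^2 := integral_nonneg fun x => sq_nonneg _
    calc (∫ x in Iuv, (T x)^2) ^ ((2:ℝ)⁻¹) = Real.sqrt (∫ x in Iuv, (T x)^2) := by
          rw [Real.sqrt_eq_rpow]
          norm_num
    _ ≤ Real.sqrt (4 * M^2 * cutNorm u + 2/M) := Real.sqrt_le_sqrt hTint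
  -- combine
  rw [hnormDf]
  have hfin : ENNReal.ofReal a + ENNReal.ofReal (Real.sqrt (4 * M^2 * cutNorm u + 2/M)) ≠ ⊤ :=
    ENNReal.add_ne_top.2 ⟨ENNReal.ofReal_ne_top, ENNReal.ofReal_ne_top⟩
  calc (eLpNorm (fun x => dd x * fm x - T x) 2 μ₀).toReal
      ≤ (ENNReal.ofReal a + ENNReal.ofReal (Real.sqrt (4 * M^2 * cutNorm u + 2/M))).toReal :=
        ENNReal.toReal_mono hfin (le_trans hsplit (add_le_add h1 h2))
  _ = a + Real.sqrt (4 * M^2 * cutNorm u + 2/M) := by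
        rw [ENNReal.toReal_add ENNReal.ofReal_ne_top ENNReal.ofReal_ne_top,
          ENNReal.toReal_ofReal ha0, ENNReal.toReal_ofReal (Real.sqrt_nonneg _)]
end Graphon13

open Graphon13 in
/-- Let `w` and `w_n` be graphons with `‖w_n − w‖_□ → 0` and
`‖d_{w_n} − d_w‖_∞ → 0`.  Then `‖L_{w_n} − L_w‖_op → 0`, i.e. the graphon Laplacians
converge in operator norm on `L²[0,1]`. -/
theorem laplacians_tendsto_opNorm_of_cutNorm_and_degree_tendsto_zero
    (w : ℝ → ℝ → ℝ) (hw : IsGraphon w)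
    (wn : ℕ → ℝ → ℝ → ℝ) (hwn : ∀ n, IsGraphon (wn n))
    (hconv : Tendsto (fun n => cutNorm fun x y => wn n x y - w x y) atTop (nhds 0))
    (hdeg : Tendsto
      (fun n => eLpNorm (fun x => degreeFn (wn n) x - degreeFn w x) ⊤
        (volume.restrict (Set.Icc (0:ℝ) 1)))
      atTop (nhds 0))
    -- the graphon Laplacians
    (L : Lp ℝ 2 (volume.restrict (Set.Icc (0:ℝ) 1)) →L[ℝ]
      Lp ℝ 2 (volume.restrict (Set.Icc (0:ℝ) 1)))
    (Ln : ℕ → Lp ℝ 2 (volume.restrict (Set.Icc (0:ℝ) 1)) →L[ℝ]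
      Lp ℝ 2 (volume.restrict (Set.Icc (0:ℝ) 1)))
    (hL : ∀ f : Lp ℝ 2 (volume.restrict (Set.Icc (0:ℝ) 1)),
      (L f : ℝ → ℝ) =ᵐ[volume.restrict (Set.Icc (0:ℝ) 1)]
        fun x => ∫ y in Set.Icc (0:ℝ) 1, w x y * (f x - f y))
    (hLn : ∀ n (f : Lp ℝ 2 (volume.restrict (Set.Icc (0:ℝ) 1))),
      (Ln n f : ℝ → ℝ) =ᵐ[volume.restrict (Set.Icc (0:ℝ) 1)]
        fun x => ∫ y in Set.Icc (0:ℝ) 1, wn n x y * (f x - f y)) :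
    Tendsto (fun n => ‖Ln n - L‖) atTop (nhds 0) := by
  rw [Metric.tendsto_atTop]
  intro ε hε
  set η : ℝ := (ε/4)^2 with hηd
  have hη0 : 0 < η := by positivity
  set M : ℝ := max 1 (4/η) with hMd
  have hM1 : (1:ℝ) ≤ M := le_max_left _ _
  have hM0 : (0:ℝ) < M := lt_of_lt_of_le one_pos hM1
  have h2M : 2 / M ≤ η / 2 := by
    have h4 : 4/η ≤ M := le_max_right _ _
    have hfs : η * (4/η) = 4 := by field_simp
    have hMη : 4 ≤ η * M := by nlinarith
    rw [div_le_div_iff₀ hM0 (by norm_num : (0:ℝ) < 2)]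
    nlinarith
  have hev1 : ∀ᶠ n in atTop,
      cutNorm (fun x y => wn n x y - w x y) < η/(16*M^2) :=
    hconv.eventually_lt_const (by positivity)
  have hev2 : ∀ᶠ n in atTop,
      eLpNorm (fun x => degreeFn (wn n) x - degreeFn w x) ⊤ μ₀ < ENNReal.ofReal (ε/4) :=
    hdeg.eventually_lt_const (ENNReal.ofReal_pos.2 (by positivity))
  obtain ⟨N, hN⟩ := eventually_atTop.1 (hev1.and hev2)
  refine ⟨N, fun n hn => ?_⟩
  obtain ⟨h1, h2⟩ := hN n hn
  rw [Real.dist_eq, sub_zero, abs_of_nonneg (norm_nonneg _)]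
  -- setup for op_bound
  set u : ℝ → ℝ → ℝ := fun x y => wn n x y - w x y with hud
  have hum : Measurable (uncurry u) := ((hwn n).1).sub hw.1
  have huB : ∀ x y, |u x y| ≤ 1 := by
    intro x y
    have hb1 := (hwn n).2.2 x y
    have hb2 := hw.2.2 x y
    rw [Set.mem_Icc] at hb1 hb2
    rw [abs_le]
    constructor
    · show -1 ≤ wn n x y - w x y
      linarith
    · show wn n x y - w x y ≤ 1
      linarith
  set dd : ℝ → ℝ := fun x => degreeFn (wn n) x - degreeFn w x with hddd
  have hdd : ∀ x, dd x = ∫ y in Iuv, u x y := by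
    intro x
    have hi1 : Integrable (fun y => wn n x y) μ₀ := by
      refine integrable_of_bdd ((hwn n).1.comp measurable_prodMk_left).aestronglyMeasurable
        (C := 1) fun y => ?_
      have := (hwn n).2.2 x y
      rw [Set.mem_Icc] at this
      rw [abs_le]; constructor <;> linarith
    have hi2 : Integrable (fun y => w x y) μ₀ := by
      refine integrable_of_bdd (hw.1.comp measurable_prodMk_left).aestronglyMeasurable
        (C := 1) fun y => ?_
      have := hw.2.2 x y
      rw [Set.mem_Icc] at this
      rw [abs_le]; constructor <;> linarith
    show degreeFn (wn n) x - degreeFn w x = ∫ y in Iuv, (wn n x y - w x y)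
    rw [integral_sub hi1 hi2]
    rfl
  -- a.e. bound on dd
  have haep : ∀ᵐ x ∂μ₀, |dd x| ≤ ε/4 := by
    have hb := ae_le_eLpNormEssSup (f := dd) (μ := μ₀)
    filter_upwards [hb] with x hx
    have hle : (‖dd x‖₊ : ℝ≥0∞) ≤ ENNReal.ofReal (ε/4) := by
      refine le_trans hx (le_trans ?_ h2.le)
      rw [eLpNorm_exponent_top]
    rw [← enorm_eq_nnnorm, ← ofReal_norm, Real.norm_eq_abs] at hle
    exact (ENNReal.ofReal_le_ofReal_iff (by positivity)).1 hle
  -- identity for (Ln n - L) f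
  have hD : ∀ f : Lp ℝ 2 μ₀, ((Ln n - L) f : ℝ → ℝ) =ᵐ[μ₀]
      fun x => ∫ y in Iuv, u x y * ((f : ℝ → ℝ) x - (f : ℝ → ℝ) y) := by
    intro f
    have hfci : Integrable (f : ℝ → ℝ) μ₀ := (Lp.memLp f).integrable one_le_two
    have hfsm : AEStronglyMeasurable (f : ℝ → ℝ) μ₀ := (Lp.memLp f).aestronglyMeasurable
    have h3 : ((Ln n - L) f : ℝ → ℝ) =ᵐ[μ₀]
        fun x => (Ln n f : ℝ → ℝ) x - (L f : ℝ → ℝ) x := by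
      have : (Ln n - L) f = Ln n f - L f := rfl
      rw [this]
      exact Lp.coeFn_sub (Ln n f) (L f)
    filter_upwards [h3, hLn n f, hL f] with x hx3 hx1 hx2
    rw [hx3, hx1, hx2]
    have hj1 : Integrable (fun y => wn n x y * ((f : ℝ → ℝ) x - (f : ℝ → ℝ) y)) μ₀ := by
      refine ((integrable_const |(f : ℝ → ℝ) x|).add hfci.abs).mono'
        (((hwn n).1.comp measurable_prodMk_left).aestronglyMeasurable.mul
          (aestronglyMeasurable_const.sub hfsm)) (ae_of_all _ fun y => ?_)
      simp only [Real.norm_eq_abs, abs_mul, Pi.add_apply]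
      have hb := (hwn n).2.2 x y
      rw [Set.mem_Icc] at hb
      have habs : |wn n x y| ≤ 1 := by rw [abs_le]; constructor <;> linarith
      calc |wn n x y| * |(f : ℝ → ℝ) x - (f : ℝ → ℝ) y|
          ≤ 1 * |(f : ℝ → ℝ) x - (f : ℝ → ℝ) y| :=
            mul_le_mul_of_nonneg_right habs (abs_nonneg _)
      _ ≤ |(f : ℝ → ℝ) x| + |(f : ℝ → ℝ) y| := by rw [one_mul]; exact abs_sub _ _
    have hj2 : Integrable (fun y => w x y * ((f : ℝ → ℝ) x - (f : ℝ → ℝ) y)) μ₀ := by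
      refine ((integrable_const |(f : ℝ → ℝ) x|).add hfci.abs).mono'
        ((hw.1.comp measurable_prodMk_left).aestronglyMeasurable.mul
          (aestronglyMeasurable_const.sub hfsm)) (ae_of_all _ fun y => ?_)
      simp only [Real.norm_eq_abs, abs_mul, Pi.add_apply]
      have hb := hw.2.2 x y
      rw [Set.mem_Icc] at hb
      have habs : |w x y| ≤ 1 := by rw [abs_le]; constructor <;> linarith
      calc |w x y| * |(f : ℝ → ℝ) x - (f : ℝ → ℝ) y|
          ≤ 1 * |(f : ℝ → ℝ) x - (f : ℝ → ℝ) y| :=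
            mul_le_mul_of_nonneg_right habs (abs_nonneg _)
      _ ≤ |(f : ℝ → ℝ) x| + |(f : ℝ → ℝ) y| := by rw [one_mul]; exact abs_sub _ _
    rw [← integral_sub hj1 hj2]
    exact integral_congr_ae (ae_of_all _ fun y => by show _ = (wn n x y - w x y) * _; ring)
  -- apply op_bound
  have hkey := op_bound hum huB hdd (by positivity : (0:ℝ) ≤ ε/4) haep hD hM1
  refine lt_of_le_of_lt hkey ?_
  have hsq : Real.sqrt (4 * M^2 * cutNorm u + 2/M) < ε/4 := by
    rw [Real.sqrt_lt' (by positivity)]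
    have hcn : 4 * M^2 * cutNorm u < η/4 := by
      have := h1
      calc 4 * M^2 * cutNorm u < 4 * M^2 * (η/(16*M^2)) := by
            have h4M : (0:ℝ) < 4 * M^2 := by positivity
            exact (mul_lt_mul_iff_right₀ h4M).2 h1
      _ = η/4 := by field_simp; ring
    calc 4 * M^2 * cutNorm u + 2/M < η/4 + η/2 := by linarith
    _ ≤ (ε/4)^2 := by rw [hηd]; linarith
  linarith
end
end
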